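/- arXiv:2509.02965 — 10 statements merged into one kernel-verified Lean document; each statement's English description precedes it below -/
import Mathlib

section
/- For any function f:[0,1]→ℝ with ∫_0^1 y(1-y)|f'(y)|² dy < ∞, one has ∫_0^1 |f(y) - ∫_0^1 f(z)dz|² dy ≤ (1/2) ∫_0^1 y(1-y)|f'(y)|² dy. -/
open MeasureTheory Set Filter
open scoped ENNReal

namespace Stmt3Aux



/-- Cauchy–Schwarz on a set of finite measure. -/
lemma cs_aux {S : Set ℝ} (L : ℝ) (hL : 0 < L) (hvol : (volume S).toReal = L)
    (hfin : volume S < ⊤)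
    {h : ℝ → ℝ} (h1 : IntegrableOn h S) (h2 : IntegrableOn (fun t => h t ^ 2) S) :
    (∫ t in S, h t) ^ 2 ≤ L * ∫ t in S, h t ^ 2 := by
  set A := ∫ t in S, h t with hA
  have key : 0 ≤ ∫ t in S, (L * h t - A) ^ 2 := integral_nonneg fun t => sq_nonneg _
  have expand : (fun t => (L * h t - A) ^ 2)
      = fun t => L ^ 2 * h t ^ 2 + ((-(2 * A * L)) * h t + A ^ 2) := by
    funext t; ring
  have hconst : Integrable (fun _ : ℝ => A ^ 2) (volume.restrict S) := by
    refine integrableOn_const hfin.ne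
  have i2 : Integrable (fun t => (-(2 * A * L)) * h t + A ^ 2) (volume.restrict S) := by
    exact (h1.const_mul _).add hconst
  rw [expand, integral_add (h2.const_mul _) i2, integral_add (h1.const_mul _) hconst,
    integral_const_mul, integral_const_mul, integral_const, measureReal_def, Measure.restrict_apply_univ, hvol,
    smul_eq_mul] at key
  nlinarith [key]




lemma f'_aemeas (f f' : ℝ → ℝ)
    (hderiv : ∀ y ∈ Set.Ioo (0 : ℝ) 1, HasDerivAt f (f' y) y) :
    AEMeasurable f' (volume.restrict (Ioo (0:ℝ) 1)) := by
  refine ⟨deriv f, measurable_deriv f, ?_⟩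
  filter_upwards [ae_restrict_mem measurableSet_Ioo] with t ht
  exact ((hderiv t ht).deriv).symm

lemma sq_int (f' : ℝ → ℝ)
    (hmeas : AEMeasurable f' (volume.restrict (Ioo (0:ℝ) 1)))
    (hwint : IntegrableOn (fun y => y * (1 - y) * (f' y) ^ 2) (Set.Ioo (0 : ℝ) 1))
    {x y : ℝ} (hy : y ∈ Ioo (0:ℝ) 1) (hx : x ∈ Ioo (0:ℝ) 1) (hyx : y < x) :
    IntegrableOn (fun t => f' t ^ 2) (Ioo y x) := by
  have hsub : Ioo y x ⊆ Ioo (0:ℝ) 1 := Ioo_subset_Ioo hy.1.le hx.2.le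
  have hc : (0:ℝ) < y * (1 - x) := mul_pos hy.1 (by linarith [hx.2])
  have hmeas' : AEMeasurable f' (volume.restrict (Ioo y x)) :=
    hmeas.mono_measure (Measure.restrict_mono hsub le_rfl)
  refine Integrable.mono' (((hwint.mono_set hsub)).const_mul (y * (1 - x))⁻¹)
    ((hmeas'.pow_const 2).aestronglyMeasurable) ?_
  filter_upwards [ae_restrict_mem measurableSet_Ioo] with t ht
  have h1 : y * (1 - x) ≤ t * (1 - t) := by
    apply mul_le_mul ht.1.le (by linarith [ht.2]) (by linarith [hx.2]) (by linarith [ht.1, hy.1])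
  rw [Real.norm_eq_abs, abs_of_nonneg (sq_nonneg _)]
  rw [← sub_nonneg]
  have : (y * (1 - x))⁻¹ * (t * (1 - t) * f' t ^ 2) - f' t ^ 2
      = (y * (1 - x))⁻¹ * ((t * (1 - t) - y * (1 - x)) * f' t ^ 2) := by
    have e : (y * (1 - x))⁻¹ * (y * (1 - x)) = 1 := inv_mul_cancel₀ hc.ne'
    linear_combination (f' t ^ 2) * e
  rw [this]
  exact mul_nonneg (inv_nonneg.2 hc.le) (mul_nonneg (sub_nonneg.2 h1) (sq_nonneg _))

lemma abs_int (f' : ℝ → ℝ)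
    (hmeas' : AEMeasurable f' (volume.restrict (Ioo y x)))
    (hsq : IntegrableOn (fun t => f' t ^ 2) (Ioo y x)) :
    IntegrableOn f' (Ioo y x) := by
  have hcon : IntegrableOn (fun _ : ℝ => (1:ℝ)) (Ioo y x) :=
    integrableOn_const (by simp)
  have hg : IntegrableOn (fun t => 2⁻¹ * (f' t ^ 2 + 1)) (Ioo y x) :=
    (hsq.add hcon).const_mul _
  refine Integrable.mono' hg hmeas'.aestronglyMeasurable ?_
  refine Eventually.of_forall fun t => ?_
  rw [Real.norm_eq_abs]
  nlinarith [sq_nonneg (|f' t| - 1), sq_abs (f' t)]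

lemma pointwise_bound (f f' : ℝ → ℝ)
    (hderiv : ∀ y ∈ Set.Ioo (0 : ℝ) 1, HasDerivAt f (f' y) y)
    (hmeas : AEMeasurable f' (volume.restrict (Ioo (0:ℝ) 1)))
    (hwint : IntegrableOn (fun y => y * (1 - y) * (f' y) ^ 2) (Set.Ioo (0 : ℝ) 1))
    {x y : ℝ} (hy : y ∈ Ioo (0:ℝ) 1) (hx : x ∈ Ioo (0:ℝ) 1) (hyx : y < x) :
    (f x - f y) ^ 2 ≤ (x - y) * ∫ t in Ioo y x, f' t ^ 2 := by
  have hsq := sq_int f' hmeas hwint hy hx hyx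
  have hmeas' : AEMeasurable f' (volume.restrict (Ioo y x)) :=
    hmeas.mono_measure (Measure.restrict_mono (Ioo_subset_Ioo hy.1.le hx.2.le) le_rfl)
  have habs : IntegrableOn f' (Ioo y x) := abs_int f' hmeas' hsq
  have hii : IntervalIntegrable f' volume y x :=
    (intervalIntegrable_iff_integrableOn_Ioo_of_le hyx.le).2 habs
  have hftc : ∫ t in y..x, f' t = f x - f y := by
    refine intervalIntegral.integral_eq_sub_of_hasDerivAt (fun t ht => hderiv t ?_) hii
    rw [uIcc_of_le hyx.le] at ht
    exact ⟨lt_of_lt_of_le hy.1 ht.1, lt_of_le_of_lt ht.2 hx.2⟩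
  have hset : ∫ t in y..x, f' t = ∫ t in Ioo y x, f' t := by
    rw [intervalIntegral.integral_of_le hyx.le, integral_Ioc_eq_integral_Ioo]
  rw [← hftc, hset]
  refine cs_aux (x - y) (by linarith) ?_ ?_ habs hsq
  · rw [Real.volume_Ioo, ENNReal.toReal_ofReal (by linarith)]
  · rw [Real.volume_Ioo]; exact ENNReal.ofReal_lt_top




lemma lint_linear {a b : ℝ} (hab : a ≤ b) (c d : ℝ)
    (hnn : ∀ s ∈ Ioo a b, 0 ≤ c + d * s) :
    ∫⁻ s in Ioo a b, ENNReal.ofReal (c + d * s)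
      = ENNReal.ofReal (c * (b - a) + d * (b ^ 2 - a ^ 2) / 2) := by
  have hint : IntegrableOn (fun s => c + d * s) (Ioo a b) :=
    ((continuous_const.add (continuous_const.mul continuous_id)).integrableOn_Icc).mono_set
      Ioo_subset_Icc_self
  rw [← ofReal_integral_eq_lintegral_ofReal hint ?nn]
  case nn => filter_upwards [ae_restrict_mem measurableSet_Ioo] with s hs using hnn s hs
  congr 1
  rw [← integral_Ioc_eq_integral_Ioo, ← intervalIntegral.integral_of_le hab,
    intervalIntegral.integral_add intervalIntegrable_const (IntervalIntegrable.const_mul intervalIntegral.intervalIntegrable_id d),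
    intervalIntegral.integral_const, intervalIntegral.integral_const_mul, integral_id]
  simp [smul_eq_mul]; ring

lemma mass {t : ℝ} (ht : t ∈ Ioo (0:ℝ) 1) :
    ∫⁻ p : ℝ × ℝ, ((if p.2 < t ∧ t < p.1 then ENNReal.ofReal (p.1 - p.2) else 0)
      + (if p.1 < t ∧ t < p.2 then ENNReal.ofReal (p.2 - p.1) else 0))
      ∂((volume.restrict (Ioo 0 1)).prod (volume.restrict (Ioo 0 1)))
    = ENNReal.ofReal (t * (1 - t)) := by
  set μ := volume.restrict (Ioo (0:ℝ) 1) with hμ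
  have hm1 : Measurable fun p : ℝ × ℝ =>
      (if p.2 < t ∧ t < p.1 then ENNReal.ofReal (p.1 - p.2) else 0) := by
    refine Measurable.ite ?_ ((measurable_fst.sub measurable_snd).ennreal_ofReal)
      measurable_const
    exact (measurableSet_lt measurable_snd measurable_const).inter
      (measurableSet_lt measurable_const measurable_fst)
  have hm2 : Measurable fun p : ℝ × ℝ =>
      (if p.1 < t ∧ t < p.2 then ENNReal.ofReal (p.2 - p.1) else 0) := by
    refine Measurable.ite ?_ ((measurable_snd.sub measurable_fst).ennreal_ofReal)
      measurable_const
    exact (measurableSet_lt measurable_fst measurable_const).inter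
      (measurableSet_lt measurable_const measurable_snd)
  have hIio : Iio t ∩ Ioo (0:ℝ) 1 = Ioo 0 t := by
    ext s
    simp only [mem_inter_iff, mem_Iio, mem_Ioo]
    exact ⟨fun h => ⟨h.2.1, h.1⟩, fun h => ⟨h.2, h.1, h.2.trans ht.2⟩⟩
  have hIoi : Ioi t ∩ Ioo (0:ℝ) 1 = Ioo t 1 := by
    ext s
    simp only [mem_inter_iff, mem_Ioi, mem_Ioo]
    exact ⟨fun h => ⟨h.1, h.2.2⟩, fun h => ⟨h.1, ht.1.trans h.1, h.2⟩⟩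
  have M1 : ∫⁻ p : ℝ × ℝ, (if p.2 < t ∧ t < p.1 then ENNReal.ofReal (p.1 - p.2) else 0)
      ∂(μ.prod μ) = ENNReal.ofReal (t * (1 - t) / 2) := by
    rw [lintegral_prod _ hm1.aemeasurable]
    have inner1 : ∀ x : ℝ, (∫⁻ y, (if y < t ∧ t < x then ENNReal.ofReal (x - y) else 0) ∂μ)
        = if t < x then ENNReal.ofReal (x * t - t ^ 2 / 2) else 0 := by
      intro x
      by_cases hx : t < x
      · simp only [hx, and_true, if_true]
        have hind : (fun y => if y < t then ENNReal.ofReal (x - y) else 0)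
            = (Iio t).indicator fun y => ENNReal.ofReal (x - y) := by
          funext s; simp [Set.indicator_apply, mem_Iio]
        rw [hind, lintegral_indicator measurableSet_Iio, hμ,
          Measure.restrict_restrict measurableSet_Iio, hIio]
        have heq : (fun y : ℝ => ENNReal.ofReal (x - y))
            = fun y => ENNReal.ofReal (x + (-1) * y) := by funext s; congr 1; ring
        rw [heq, lint_linear ht.1.le x (-1) (fun s hs => by nlinarith [hs.2, hx])]
        congr 1; ring
      · simp [hx]
    rw [lintegral_congr inner1]
    have hind : (fun x => if t < x then ENNReal.ofReal (x * t - t ^ 2 / 2) else 0)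
        = (Ioi t).indicator fun x => ENNReal.ofReal (x * t - t ^ 2 / 2) := by
      funext s; simp [Set.indicator_apply, mem_Ioi]
    rw [hind, lintegral_indicator measurableSet_Ioi, hμ,
      Measure.restrict_restrict measurableSet_Ioi, hIoi]
    have heq : (fun x : ℝ => ENNReal.ofReal (x * t - t ^ 2 / 2))
        = fun x => ENNReal.ofReal ((-(t ^ 2) / 2) + t * x) := by
      funext s; congr 1; ring
    rw [heq, lint_linear ht.2.le (-(t ^ 2) / 2) t (fun s hs => by nlinarith [hs.1, ht.1])]
    congr 1; ring
  have M2 : ∫⁻ p : ℝ × ℝ, (if p.1 < t ∧ t < p.2 then ENNReal.ofReal (p.2 - p.1) else 0)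
      ∂(μ.prod μ) = ENNReal.ofReal (t * (1 - t) / 2) := by
    rw [lintegral_prod _ hm2.aemeasurable]
    have inner2 : ∀ x : ℝ, (∫⁻ y, (if x < t ∧ t < y then ENNReal.ofReal (y - x) else 0) ∂μ)
        = if x < t then ENNReal.ofReal ((-x) * (1 - t) + (1 - t ^ 2) / 2) else 0 := by
      intro x
      by_cases hx : x < t
      · simp only [hx, true_and, if_true]
        have hind : (fun y => if t < y then ENNReal.ofReal (y - x) else 0)
            = (Ioi t).indicator fun y => ENNReal.ofReal (y - x) := by
          funext s; simp [Set.indicator_apply, mem_Ioi]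
        rw [hind, lintegral_indicator measurableSet_Ioi, hμ,
          Measure.restrict_restrict measurableSet_Ioi, hIoi]
        have heq : (fun y : ℝ => ENNReal.ofReal (y - x))
            = fun y => ENNReal.ofReal ((-x) + 1 * y) := by funext s; congr 1; ring
        rw [heq, lint_linear ht.2.le (-x) 1 (fun s hs => by nlinarith [hs.1, hx])]
        congr 1; ring
      · simp [hx]
    rw [lintegral_congr inner2]
    have hind : (fun x => if x < t then ENNReal.ofReal ((-x) * (1 - t) + (1 - t ^ 2) / 2) else 0)
        = (Iio t).indicator fun x => ENNReal.ofReal ((-x) * (1 - t) + (1 - t ^ 2) / 2) := by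
      funext s; simp [Set.indicator_apply, mem_Iio]
    rw [hind, lintegral_indicator measurableSet_Iio, hμ,
      Measure.restrict_restrict measurableSet_Iio, hIio]
    have heq : (fun x : ℝ => ENNReal.ofReal ((-x) * (1 - t) + (1 - t ^ 2) / 2))
        = fun x => ENNReal.ofReal ((1 - t ^ 2) / 2 + (-(1 - t)) * x) := by
      funext s; congr 1; ring
    rw [heq, lint_linear ht.1.le ((1 - t ^ 2) / 2) (-(1 - t))
      (fun s hs => by nlinarith [hs.1, hs.2, ht.2])]
    congr 1; ring
  rw [lintegral_add_left hm1, M1, M2, ← ENNReal.ofReal_add (by nlinarith [ht.1, ht.2])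
    (by nlinarith [ht.1, ht.2])]
  congr 1; ring


lemma key_lintegral (f f' : ℝ → ℝ)
    (hderiv : ∀ y ∈ Set.Ioo (0 : ℝ) 1, HasDerivAt f (f' y) y)
    (hwint : IntegrableOn (fun y => y * (1 - y) * (f' y) ^ 2) (Set.Ioo (0 : ℝ) 1)) :
    ∫⁻ p : ℝ × ℝ, ENNReal.ofReal ((f p.1 - f p.2) ^ 2)
        ∂((volume.restrict (Ioo 0 1)).prod (volume.restrict (Ioo 0 1)))
      ≤ ∫⁻ t in Ioo (0:ℝ) 1, ENNReal.ofReal (t * (1 - t) * f' t ^ 2) := by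
  set μ := volume.restrict (Ioo (0:ℝ) 1) with hμ
  have hmeasf' : AEMeasurable f' μ := f'_aemeas f f' hderiv
  have hgae : AEMeasurable (fun t => ENNReal.ofReal (f' t ^ 2)) μ :=
    (hmeasf'.pow_const 2).ennreal_ofReal
  obtain ⟨g, hgmeas, hg⟩ : ∃ g : ℝ → ℝ≥0∞, Measurable g ∧
      (fun t => ENNReal.ofReal (f' t ^ 2)) =ᵐ[μ] g :=
    ⟨hgae.mk _, hgae.measurable_mk, hgae.ae_eq_mk⟩
  set W : ℝ × ℝ → ℝ → ℝ≥0∞ := fun p t =>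
    (if p.2 < t ∧ t < p.1 then ENNReal.ofReal (p.1 - p.2) else 0)
      + (if p.1 < t ∧ t < p.2 then ENNReal.ofReal (p.2 - p.1) else 0) with hW
  -- half claim
  have half : ∀ x y : ℝ, x ∈ Ioo (0:ℝ) 1 → y ∈ Ioo (0:ℝ) 1 → y < x →
      ENNReal.ofReal ((f x - f y) ^ 2)
        ≤ ∫⁻ t, (if y < t ∧ t < x then ENNReal.ofReal (x - y) else 0) * g t ∂μ := by
    intro x y hx hy hyx
    have hsub : Ioo y x ⊆ Ioo (0:ℝ) 1 := Ioo_subset_Ioo hy.1.le hx.2.le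
    have hind : (fun t => (if y < t ∧ t < x then ENNReal.ofReal (x - y) else 0) * g t)
        = (Ioo y x).indicator fun t => ENNReal.ofReal (x - y) * g t := by
      funext s
      by_cases hs : s ∈ Ioo y x
      · simp [Set.indicator_of_mem hs, mem_Ioo.1 hs]
      · rw [Set.indicator_of_notMem hs]
        rw [mem_Ioo] at hs
        simp [hs]
    rw [hind, lintegral_indicator measurableSet_Ioo, hμ,
      Measure.restrict_restrict measurableSet_Ioo, inter_eq_self_of_subset_left hsub]
    have hg' : (fun t => ENNReal.ofReal (f' t ^ 2)) =ᵐ[volume.restrict (Ioo y x)] g :=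
      hg.filter_mono (ae_mono (Measure.restrict_mono hsub le_rfl))
    rw [lintegral_congr_ae ((hg'.symm).mono fun s hs => by rw [hs]),
      lintegral_const_mul' _ _ ENNReal.ofReal_ne_top,
      ← ofReal_integral_eq_lintegral_ofReal (sq_int f' hmeasf' hwint hy hx hyx)
        (Eventually.of_forall fun s => sq_nonneg _),
      ← ENNReal.ofReal_mul (by linarith : (0:ℝ) ≤ x - y)]
    exact ENNReal.ofReal_le_ofReal (pointwise_bound f f' hderiv hmeasf' hwint hy hx hyx)
  -- measurability of W at fixed t and jointly
  have hWt : ∀ t : ℝ, Measurable fun p : ℝ × ℝ => W p t := by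
    intro t
    apply Measurable.add
    · refine Measurable.ite ?_ ((measurable_fst.sub measurable_snd).ennreal_ofReal)
        measurable_const
      exact (measurableSet_lt measurable_snd measurable_const).inter
        (measurableSet_lt measurable_const measurable_fst)
    · refine Measurable.ite ?_ ((measurable_snd.sub measurable_fst).ennreal_ofReal)
        measurable_const
      exact (measurableSet_lt measurable_fst measurable_const).inter
        (measurableSet_lt measurable_const measurable_snd)
  have hUnc : Measurable (Function.uncurry fun (p : ℝ × ℝ) (t : ℝ) => W p t * g t) := by
    have h1 : Measurable fun q : (ℝ × ℝ) × ℝ => W q.1 q.2 := by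
      apply Measurable.add
      · refine Measurable.ite ?_
          ((measurable_fst.fst.sub measurable_fst.snd).ennreal_ofReal) measurable_const
        exact (measurableSet_lt measurable_fst.snd measurable_snd).inter
          (measurableSet_lt measurable_snd measurable_fst.fst)
      · refine Measurable.ite ?_
          ((measurable_fst.snd.sub measurable_fst.fst).ennreal_ofReal) measurable_const
        exact (measurableSet_lt measurable_fst.fst measurable_snd).inter
          (measurableSet_lt measurable_snd measurable_fst.snd)
    exact h1.mul (hgmeas.comp measurable_snd)
  have hae : ∀ᵐ p ∂(μ.prod μ), p ∈ (Ioo (0:ℝ) 1) ×ˢ (Ioo (0:ℝ) 1) := by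
    rw [hμ, Measure.prod_restrict]
    exact ae_restrict_mem (measurableSet_Ioo.prod measurableSet_Ioo)
  calc ∫⁻ p : ℝ × ℝ, ENNReal.ofReal ((f p.1 - f p.2) ^ 2) ∂(μ.prod μ)
      ≤ ∫⁻ p : ℝ × ℝ, (∫⁻ t, W p t * g t ∂μ) ∂(μ.prod μ) := by
        refine lintegral_mono_ae ?_
        filter_upwards [hae] with p hp
        rcases lt_trichotomy p.1 p.2 with h | h | h
        · have h2 : (f p.1 - f p.2) ^ 2 = (f p.2 - f p.1) ^ 2 := by ring
          rw [h2]
          refine le_trans (half p.2 p.1 hp.2 hp.1 h) (lintegral_mono fun t => ?_)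
          rw [hW, add_mul]
          exact le_add_self
        · simp [h]
        · refine le_trans (half p.1 p.2 hp.1 hp.2 h) (lintegral_mono fun t => ?_)
          rw [hW, add_mul]
          exact le_self_add
    _ = ∫⁻ t, (∫⁻ p : ℝ × ℝ, W p t * g t ∂(μ.prod μ)) ∂μ :=
        lintegral_lintegral_swap hUnc.aemeasurable
    _ = ∫⁻ t, (∫⁻ p : ℝ × ℝ, W p t ∂(μ.prod μ)) * g t ∂μ :=
        lintegral_congr fun t => lintegral_mul_const _ (hWt t)
    _ = ∫⁻ t, ENNReal.ofReal (t * (1 - t) * f' t ^ 2) ∂μ := by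
        refine lintegral_congr_ae ?_
        filter_upwards [ae_restrict_mem measurableSet_Ioo, hg] with t ht hgt
        rw [hW, mass ht, ← hgt, ← ENNReal.ofReal_mul
          (mul_nonneg ht.1.le (by linarith [ht.2]))]

end Stmt3Aux

open Stmt3Aux in
/-- Weighted Poincaré-type inequality: for `f : [0,1] → ℝ` (differentiable on `(0,1)`) with
`∫₀¹ y(1-y)|f'(y)|² dy < ∞`, one has
`∫₀¹ |f(y) - ∫₀¹ f(z) dz|² dy ≤ (1/2) ∫₀¹ y(1-y)|f'(y)|² dy`. -/
theorem stmt_3 (f f' : ℝ → ℝ)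
    (hderiv : ∀ y ∈ Set.Ioo (0 : ℝ) 1, HasDerivAt f (f' y) y)
    (hfint : IntegrableOn f (Set.Ioo (0 : ℝ) 1))
    (hfsq : IntegrableOn (fun y => (f y) ^ 2) (Set.Ioo (0 : ℝ) 1))
    (hwint : IntegrableOn (fun y => y * (1 - y) * (f' y) ^ 2) (Set.Ioo (0 : ℝ) 1)) :
    ∫ y in Set.Ioo (0 : ℝ) 1, (f y - ∫ z in Set.Ioo (0 : ℝ) 1, f z) ^ 2
      ≤ (1 / 2) * ∫ y in Set.Ioo (0 : ℝ) 1, y * (1 - y) * (f' y) ^ 2 := by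
  set μ := volume.restrict (Ioo (0:ℝ) 1) with hμ
  have hvol1 : volume (Ioo (0:ℝ) 1) = 1 := by
    rw [Real.volume_Ioo]; norm_num
  haveI : IsFiniteMeasure μ := by
    constructor
    rw [hμ, Measure.restrict_apply_univ, hvol1]
    exact ENNReal.one_lt_top
  set m := ∫ z in Set.Ioo (0:ℝ) 1, f z with hm
  have hμuniv : (μ Set.univ).toReal = 1 := by
    rw [hμ, Measure.restrict_apply_univ, hvol1]; rfl
  -- Step A
  have hA : ∫ y in Set.Ioo (0:ℝ) 1, (f y - m) ^ 2
      = (∫ y in Set.Ioo (0:ℝ) 1, f y ^ 2) - m ^ 2 := by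
    have hexp : (fun y => (f y - m) ^ 2)
        = fun y => f y ^ 2 + ((-(2 * m)) * f y + m ^ 2) := by funext y; ring
    have hconst : Integrable (fun _ : ℝ => m ^ 2) μ := integrable_const _
    have i2 : Integrable (fun y => (-(2 * m)) * f y + m ^ 2) μ :=
      (hfint.const_mul _).add hconst
    rw [hexp, integral_add hfsq i2, integral_add (hfint.const_mul _) hconst,
      integral_const_mul, integral_const, measureReal_def, hμuniv, smul_eq_mul, ← hm]
    ring
  -- Step B
  have hexpB : (fun p : ℝ × ℝ => (f p.1 - f p.2) ^ 2)
      = fun p => f p.1 ^ 2 * 1 + (1 * f p.2 ^ 2 + (-2) * (f p.1 * f p.2)) := by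
    funext p; ring
  have i1 : Integrable (fun p : ℝ × ℝ => f p.1 ^ 2 * 1) (μ.prod μ) :=
    hfsq.mul_prod (integrable_const 1)
  have i2 : Integrable (fun p : ℝ × ℝ => 1 * f p.2 ^ 2) (μ.prod μ) :=
    (integrable_const 1).mul_prod hfsq
  have i3 : Integrable (fun p : ℝ × ℝ => (-2) * (f p.1 * f p.2)) (μ.prod μ) :=
    (hfint.mul_prod hfint).const_mul _
  have i23 : Integrable (fun p : ℝ × ℝ => 1 * f p.2 ^ 2 + (-2) * (f p.1 * f p.2)) (μ.prod μ) :=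
    i2.add i3
  have hprodint : Integrable (fun p : ℝ × ℝ => (f p.1 - f p.2) ^ 2) (μ.prod μ) := by
    rw [hexpB]; exact i1.add (i2.add i3)
  have hone : ∫ _ : ℝ, (1:ℝ) ∂μ = 1 := by
    rw [integral_const, measureReal_def, hμuniv, smul_eq_mul]; ring
  have hB : ∫ p : ℝ × ℝ, (f p.1 - f p.2) ^ 2 ∂(μ.prod μ)
      = 2 * (∫ y in Set.Ioo (0:ℝ) 1, f y ^ 2) - 2 * m ^ 2 := by
    have p1 : ∫ p : ℝ × ℝ, f p.1 ^ 2 * 1 ∂(μ.prod μ)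
        = (∫ y, f y ^ 2 ∂μ) * ∫ _, (1:ℝ) ∂μ :=
      integral_prod_mul (L := ℝ) (fun a => f a ^ 2) (fun _ => (1:ℝ))
    have p2 : ∫ p : ℝ × ℝ, 1 * f p.2 ^ 2 ∂(μ.prod μ)
        = (∫ _, (1:ℝ) ∂μ) * ∫ y, f y ^ 2 ∂μ :=
      integral_prod_mul (L := ℝ) (fun _ => (1:ℝ)) (fun a => f a ^ 2)
    have p3 : ∫ p : ℝ × ℝ, f p.1 * f p.2 ∂(μ.prod μ)
        = (∫ y, f y ∂μ) * ∫ y, f y ∂μ :=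
      integral_prod_mul (L := ℝ) f f
    rw [hexpB, integral_add i1 i23, integral_add i2 i3, p1, p2, integral_const_mul, p3, hone, ← hm]
    ring
  -- Step C
  have hrhs_nonneg : ∀ᵐ t ∂μ, 0 ≤ t * (1 - t) * f' t ^ 2 := by
    filter_upwards [ae_restrict_mem measurableSet_Ioo] with t ht
    exact mul_nonneg (mul_nonneg ht.1.le (by linarith [ht.2])) (sq_nonneg _)
  have e1 : ENNReal.ofReal (∫ p : ℝ × ℝ, (f p.1 - f p.2) ^ 2 ∂(μ.prod μ))
      = ∫⁻ p : ℝ × ℝ, ENNReal.ofReal ((f p.1 - f p.2) ^ 2) ∂(μ.prod μ) :=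
    ofReal_integral_eq_lintegral_ofReal hprodint (Eventually.of_forall fun p => sq_nonneg _)
  have e2 : ENNReal.ofReal (∫ t in Set.Ioo (0:ℝ) 1, t * (1 - t) * f' t ^ 2)
      = ∫⁻ t in Ioo (0:ℝ) 1, ENNReal.ofReal (t * (1 - t) * f' t ^ 2) :=
    ofReal_integral_eq_lintegral_ofReal hwint hrhs_nonneg
  have hC : ∫ p : ℝ × ℝ, (f p.1 - f p.2) ^ 2 ∂(μ.prod μ)
      ≤ ∫ t in Set.Ioo (0:ℝ) 1, t * (1 - t) * f' t ^ 2 := by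
    have hkey := key_lintegral f f' hderiv hwint
    rw [← hμ, ← e1, ← e2] at hkey
    exact (ENNReal.ofReal_le_ofReal_iff (integral_nonneg_of_ae hrhs_nonneg)).1 hkey
  linarith [hA, hB, hC]
end

section
/- Let p∈[2,4] and H(z) = ((p-1)(p-4)/4)z^p + ((3p-p²)/2)z^{p-1} + (p(p-1)/4)z^{p-2} - 1. Then H(1)=0 and H(z)<0 for all z>1. -/
/-- For `p ∈ [2,4]` and
`H(z) = ((p-1)(p-4)/4)z^p + ((3p-p²)/2)z^(p-1) + (p(p-1)/4)z^(p-2) - 1`,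
one has `H(1) = 0` and `H(z) < 0` for all `z > 1`. -/
theorem stmt_5 (p : ℝ) (hp : p ∈ Set.Icc (2 : ℝ) 4)
    (H : ℝ → ℝ)
    (hH : ∀ z : ℝ, H z = ((p - 1) * (p - 4) / 4) * z ^ p + ((3 * p - p ^ 2) / 2) * z ^ (p - 1)
      + (p * (p - 1) / 4) * z ^ (p - 2) - 1) :
    H 1 = 0 ∧ ∀ z : ℝ, 1 < z → H z < 0 := by
  obtain ⟨hp2, hp4⟩ := hp
  have hHfun : H = fun z : ℝ => ((p - 1) * (p - 4) / 4) * z ^ p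
      + ((3 * p - p ^ 2) / 2) * z ^ (p - 1) + (p * (p - 1) / 4) * z ^ (p - 2) - 1 :=
    funext hH
  have h1 : H 1 = 0 := by
    rw [hH]
    simp [Real.one_rpow]
    ring
  refine ⟨h1, ?_⟩
  have hderiv : ∀ x : ℝ, 0 < x → HasDerivAt H
      (((p - 1) * (p - 4) / 4) * (p * x ^ (p - 1))
        + ((3 * p - p ^ 2) / 2) * ((p - 1) * x ^ (p - 1 - 1))
        + (p * (p - 1) / 4) * ((p - 2) * x ^ (p - 2 - 1))) x := by
    intro x hx
    rw [hHfun]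
    have d1 := (Real.hasDerivAt_rpow_const (p := p) (Or.inl hx.ne')).const_mul
      ((p - 1) * (p - 4) / 4)
    have d2 := (Real.hasDerivAt_rpow_const (p := p - 1) (Or.inl hx.ne')).const_mul
      ((3 * p - p ^ 2) / 2)
    have d3 := (Real.hasDerivAt_rpow_const (p := p - 2) (Or.inl hx.ne')).const_mul
      (p * (p - 1) / 4)
    exact ((d1.add d2).add d3).sub_const 1
  have hderivneg : ∀ x : ℝ, 1 < x → deriv H x < 0 := by
    intro x hx1
    have hx : (0 : ℝ) < x := lt_trans one_pos hx1
    rw [(hderiv x hx).deriv]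
    have e1 : x ^ (p - 1 - 1) = x ^ (p - 3) * x := by
      rw [show p - 1 - 1 = (p - 3) + 1 by ring, Real.rpow_add hx, Real.rpow_one]
    have e2 : x ^ (p - 1) = x ^ (p - 3) * x * x := by
      rw [show p - 1 = ((p - 3) + 1) + 1 by ring, Real.rpow_add hx, Real.rpow_one,
        Real.rpow_add hx, Real.rpow_one]
    have e3 : x ^ (p - 2 - 1) = x ^ (p - 3) := by rw [show p - 2 - 1 = p - 3 by ring]
    have ht : 0 < x ^ (p - 3) := Real.rpow_pos_of_pos hx _
    have hg : (p - 4) * (x * x) + (6 - 2 * p) * x + (p - 2) < 0 := by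
      nlinarith [mul_pos (sub_pos.2 hx1) (sub_pos.2 hx1),
        mul_nonneg (sub_nonneg.2 hp4) (le_of_lt (sub_pos.2 hx1))]
    have hpp : 0 < p * (p - 1) / 4 := by nlinarith
    have hkey : ((p - 1) * (p - 4) / 4) * (p * (x * x))
        + ((3 * p - p ^ 2) / 2) * ((p - 1) * x) + (p * (p - 1) / 4) * (p - 2) < 0 := by
      have := mul_neg_of_pos_of_neg hpp hg
      nlinarith [this]
    calc ((p - 1) * (p - 4) / 4) * (p * x ^ (p - 1))
          + ((3 * p - p ^ 2) / 2) * ((p - 1) * x ^ (p - 1 - 1))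
          + (p * (p - 1) / 4) * ((p - 2) * x ^ (p - 2 - 1))
        = x ^ (p - 3) * (((p - 1) * (p - 4) / 4) * (p * (x * x))
            + ((3 * p - p ^ 2) / 2) * ((p - 1) * x) + (p * (p - 1) / 4) * (p - 2)) := by
          rw [e1, e2, e3]; ring
      _ < 0 := mul_neg_of_pos_of_neg ht hkey
  intro z hz
  have hanti : StrictAntiOn H (Set.Ici (1 : ℝ)) := by
    apply strictAntiOn_of_deriv_neg (convex_Ici 1)
    · intro x hx
      exact (hderiv x (lt_of_lt_of_le one_pos hx)).continuousAt.continuousWithinAt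
    · intro x hx
      rw [interior_Ici] at hx
      exact hderivneg x hx
  have := hanti (Set.self_mem_Ici) (Set.mem_Ici.2 hz.le) hz
  rwa [h1] at this
end

section
/- Let f(u)=u^p with p∈[2,4], 0<u_+<u_-, s=(f(u_+)-f(u_-))/(u_+-u_-), and h(U)=-s(U-u_+)+f(U)-f(u_+). Then for every U∈(u_+,u_-): h(U)+(u_+-U)h'(U) < -(h''(U)/4)(u_+-U)² < 0. -/
open Real


-- Lemma A: convexity in exponent
lemma auxA (q t : ℝ) (hq1 : 1 ≤ q) (hq3 : q ≤ 3) (ht0 : 0 < t) :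
    t ^ q ≤ (3 - q) / 2 * t + (q - 1) / 2 * t ^ (3:ℝ) := by
  have hl : (0:ℝ) ≤ (3 - q) / 2 := by linarith
  have hm : (0:ℝ) ≤ (q - 1) / 2 := by linarith
  have hsum : (3 - q) / 2 + (q - 1) / 2 = 1 := by ring
  have hc := convexOn_exp.2 (Set.mem_univ (log t)) (Set.mem_univ (3 * log t)) hl hm hsum
  simp only [smul_eq_mul] at hc
  have e1 : (3 - q) / 2 * log t + (q - 1) / 2 * (3 * log t) = log t * q := by ring
  rw [e1] at hc
  calc t ^ q = rexp (log t * q) := rpow_def_of_pos ht0 q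
    _ ≤ (3 - q) / 2 * rexp (log t) + (q - 1) / 2 * rexp (3 * log t) := hc
    _ = (3 - q) / 2 * t + (q - 1) / 2 * t ^ (3:ℝ) := by
        rw [exp_log ht0, mul_comm (3:ℝ) (log t), ← rpow_def_of_pos ht0 3]

-- Lemma B: antiderivative inequality
lemma auxB (p t : ℝ) (hp2 : 2 ≤ p) (hp4 : p ≤ 4) (ht0 : 0 < t) (ht1 : t < 1) :
    (1 - t ^ p) / p ≤ (4 - p) / 4 * (1 - t ^ (2:ℕ)) + (p - 2) / 8 * (1 - t ^ (4:ℕ)) := by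
  have hp0 : (0:ℝ) < p := by linarith
  set W : ℝ → ℝ := fun u => (4 - p) / 4 * (1 - u ^ (2:ℕ)) + (p - 2) / 8 * (1 - u ^ (4:ℕ)) - (1 - u ^ p) / p
    with hW
  have hder : ∀ u : ℝ, HasDerivAt W
      ((4 - p) / 4 * (-(2 * u)) + (p - 2) / 8 * (-(4 * u ^ (3:ℕ))) + u ^ (p - 1)) u := by
    intro u
    have h1 : HasDerivAt (fun u : ℝ => u ^ p) (p * u ^ (p - 1)) u :=
      Real.hasDerivAt_rpow_const (Or.inr (by linarith))
    have h2 : HasDerivAt (fun u : ℝ => u ^ (2:ℕ)) (2 * u) u := by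
      simpa using (hasDerivAt_pow 2 u)
    have h4 : HasDerivAt (fun u : ℝ => u ^ (4:ℕ)) (4 * u ^ (3:ℕ)) u := by
      simpa using (hasDerivAt_pow 4 u)
    have := (((h2.const_sub 1).const_mul ((4 - p)/4)).add
      ((h4.const_sub 1).const_mul ((p - 2)/8))).sub
      (((h1.const_sub 1).div_const p))
    convert this using 1
    · rfl
    · rfl
    · rfl
    field_simp
    ring
  have hanti : AntitoneOn W (Set.Icc t 1) := by
    apply antitoneOn_of_deriv_nonpos (convex_Icc t 1)
    · exact fun u _ => ((hder u).continuousAt).continuousWithinAt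
    · intro u hu
      exact ((hder u).differentiableAt).differentiableWithinAt
    · intro u hu
      rw [interior_Icc] at hu
      rw [(hder u).deriv]
      have hu0 : 0 < u := lt_trans ht0 hu.1
      have := auxA (p - 1) u (by linarith) (by linarith) hu0
      have e3 : u ^ (3:ℝ) = u ^ (3:ℕ) := by
        rw [← Real.rpow_natCast u 3]; norm_num
      rw [e3] at this
      nlinarith [this]
  have hW1 : W 1 = 0 := by simp [hW]
  have hWt : 0 ≤ W t := by
    have := hanti (Set.left_mem_Icc.2 (le_of_lt ht1)) (Set.right_mem_Icc.2 (le_of_lt ht1)) (le_of_lt ht1)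
    rw [hW1] at this
    linarith
  simp only [hW] at hWt
  linarith

-- Lemma K
lemma auxK (p t : ℝ) (hp2 : 2 ≤ p) (hp4 : p ≤ 4) (ht0 : 0 < t) (ht1 : t < 1) :
    0 < t ^ p - 1 + p * (1 - t) - p * (p - 1) / 4 * (1 - t) ^ 2 := by
  have hp0 : (0:ℝ) < p := by linarith
  have hB := auxB p t hp2 hp4 ht0 ht1
  -- polynomial strict part: (1-t) - (4-p)/4*(1-t^2) - (p-2)/8*(1-t^4) - (p-1)/4*(1-t)^2 > 0
  have hD : 0 < (1 - t) - (4 - p) / 4 * (1 - t ^ (2:ℕ)) - (p - 2) / 8 * (1 - t ^ (4:ℕ))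
      - (p - 1) / 4 * (1 - t) ^ 2 := by
    nlinarith [mul_pos ht0 (sub_pos.2 ht1), mul_nonneg (mul_pos ht0 (sub_pos.2 ht1)).le (sub_nonneg.2 hp2),
      mul_nonneg (mul_pos ht0 (sub_pos.2 ht1)).le (sub_nonneg.2 hp4),
      mul_nonneg (mul_nonneg (mul_pos ht0 (sub_pos.2 ht1)).le (sub_nonneg.2 hp4)) ht0.le,
      mul_nonneg (mul_nonneg (mul_pos ht0 (sub_pos.2 ht1)).le (sub_nonneg.2 hp2)) ht0.le]
  have := mul_lt_mul_of_pos_left (add_lt_add_of_le_of_lt hB hD) hp0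
  have e : p * ((1 - t ^ p) / p + 0) = 1 - t ^ p := by field_simp; ring
  rw [e] at this
  ring_nf at this ⊢
  linarith


/-- For `f(u) = u^p`, `p ∈ [2,4]`, `0 < u₊ < u₋`, `s` the Rankine–Hugoniot speed and
`h(U) = -s(U-u₊) + f(U) - f(u₊)` (so `h'(U) = -s + p U^(p-1)`, `h''(U) = p(p-1)U^(p-2)`),
for every `U ∈ (u₊, u₋)` one has `h(U) + (u₊-U)h'(U) < -(h''(U)/4)(u₊-U)² < 0`.
Here `uP` denotes `u₊` and `uM` denotes `u₋`. -/
theorem stmt_6 (p uP uM : ℝ) (hp : p ∈ Set.Icc (2 : ℝ) 4) (hup : 0 < uP) (hlt : uP < uM)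
    (f : ℝ → ℝ) (hf : ∀ u : ℝ, f u = u ^ p)
    (s : ℝ) (hs : s = (f uP - f uM) / (uP - uM))
    (h h' h'' : ℝ → ℝ)
    (hh : ∀ U : ℝ, h U = -s * (U - uP) + f U - f uP)
    (hh' : ∀ U : ℝ, h' U = -s + p * U ^ (p - 1))
    (hh'' : ∀ U : ℝ, h'' U = p * (p - 1) * U ^ (p - 2)) :
    ∀ U ∈ Set.Ioo uP uM,
      h U + (uP - U) * h' U < -(h'' U / 4) * (uP - U) ^ 2
      ∧ -(h'' U / 4) * (uP - U) ^ 2 < 0 := by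
  obtain ⟨hp2, hp4⟩ := hp
  intro U hU
  obtain ⟨hU1, hU2⟩ := hU
  have hU0 : 0 < U := lt_trans hup hU1
  have hA : 0 < U ^ p := Real.rpow_pos_of_pos hU0 p
  have hC : 0 < U ^ (p - 2) := Real.rpow_pos_of_pos hU0 _
  have hsq : 0 < (uP - U) ^ 2 := by nlinarith
  have goal2 : -(h'' U / 4) * (uP - U) ^ 2 < 0 := by
    rw [hh'']
    have hpos : 0 < p * (p - 1) * U ^ (p - 2) :=
      mul_pos (mul_pos (by linarith) (by linarith)) hC
    nlinarith [mul_pos hpos hsq]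
  refine ⟨?_, goal2⟩
  have ht0 : 0 < uP / U := div_pos hup hU0
  have ht1 : uP / U < 1 := (div_lt_one hU0).2 hU1
  have hK := auxK p (uP / U) hp2 hp4 ht0 ht1
  rw [Real.div_rpow hup.le hU0.le] at hK
  have hKm := mul_pos hA hK
  have f1 : U ^ (p - 1) = U ^ p / U := by
    rw [Real.rpow_sub hU0, Real.rpow_one]
  have f2 : U ^ (p - 2) = U ^ p / U ^ (2:ℕ) := by
    rw [Real.rpow_sub hU0, show (2:ℝ) = ((2:ℕ):ℝ) by norm_num, Real.rpow_natCast]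
  rw [hh, hh', hh'', hf, hf, f1, f2]
  have E : U ^ p * (uP ^ p / U ^ p - 1 + p * (1 - uP / U) - p * (p - 1) / 4 * (1 - uP / U) ^ 2)
      = -(p * (p - 1) * (U ^ p / U ^ (2:ℕ)) / 4) * (uP - U) ^ 2
        - (-s * (U - uP) + U ^ p - uP ^ p + (uP - U) * (-s + p * (U ^ p / U))) := by
    field_simp
    ring
  linarith [hKm, E]
end

section
/- Let f(u)=u^p with p∈[2,4], 0<u_+<u_-, h(U)=-s(U-u_+)+f(U)-f(u_+) with s the Rankine–Hugoniot speed, and define m(U)=(U-u_-)(u_+-U)(h(U)h''(U)-(h'(U))²)+3h(U)²+h(U)h'(U)(u_++u_--2U). Then m(U)>0 for every U∈(u_+,u_-). -/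
set_option maxHeartbeats 800000

/-- Bernoulli-type estimate used for the factor `B`:
for `0 < w ≤ U` and `2 ≤ p`,
`(p-1) U^(p-2) (U-w)^2 ≤ w^p - U^p + p U^(p-1) (U-w)`. -/
lemma stmt8_lemB (p w U : ℝ) (hw : 0 < w) (hwU : w ≤ U) (hp : 2 ≤ p) :
    (p - 1) * U ^ (p - 2) * (U - w) ^ 2 ≤ w ^ p - U ^ p + p * U ^ (p - 1) * (U - w) := by
  rcases eq_or_lt_of_le hwU with rfl | hlt
  · simp
  set Φ : ℝ → ℝ := fun t =>
    w ^ p - t ^ p + p * (t ^ (p - 1) * (t - w)) - (p - 1) * (t ^ (p - 2) * (t - w) ^ 2) with hΦdef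
  have hderiv : ∀ t : ℝ, 0 < t →
      HasDerivAt Φ ((p - 1) * (p - 2) * w * (t - w) * t ^ (p - 3)) t := by
    intro t ht
    have hid : HasDerivAt (fun x : ℝ => x - w) 1 t := (hasDerivAt_id t).sub_const w
    have hsq : HasDerivAt (fun x : ℝ => (x - w) ^ 2) ((2 : ℕ) * (t - w) ^ 1 * 1) t := hid.pow 2
    have h1 : HasDerivAt (fun x : ℝ => x ^ p) (p * t ^ (p - 1)) t :=
      Real.hasDerivAt_rpow_const (Or.inl ht.ne')
    have h2 : HasDerivAt (fun x : ℝ => x ^ (p - 1)) ((p - 1) * t ^ (p - 1 - 1)) t :=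
      Real.hasDerivAt_rpow_const (Or.inl ht.ne')
    have h3 : HasDerivAt (fun x : ℝ => x ^ (p - 2)) ((p - 2) * t ^ (p - 2 - 1)) t :=
      Real.hasDerivAt_rpow_const (Or.inl ht.ne')
    have hD : HasDerivAt Φ
        (0 - p * t ^ (p - 1) + p * ((p - 1) * t ^ (p - 1 - 1) * (t - w) + t ^ (p - 1) * 1)
          - (p - 1) * ((p - 2) * t ^ (p - 2 - 1) * (t - w) ^ 2
            + t ^ (p - 2) * ((2 : ℕ) * (t - w) ^ 1 * 1))) t := by
      exact (((hasDerivAt_const t (w ^ p)).sub h1).add ((h2.mul hid).const_mul p)).sub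
        ((h3.mul hsq).const_mul (p - 1))
    have e1 : t ^ (p - 1) = t ^ (p - 3) * t * t := by
      rw [show p - 1 = p - 3 + 1 + 1 by ring, Real.rpow_add ht, Real.rpow_add ht, Real.rpow_one]
    have e2 : t ^ (p - 2) = t ^ (p - 3) * t := by
      rw [show p - 2 = p - 3 + 1 by ring, Real.rpow_add ht, Real.rpow_one]
    have e3 : t ^ (p - 1 - 1) = t ^ (p - 3) * t := by
      rw [show p - 1 - 1 = p - 3 + 1 by ring, Real.rpow_add ht, Real.rpow_one]
    have e4 : t ^ (p - 2 - 1) = t ^ (p - 3) := by rw [show p - 2 - 1 = p - 3 by ring]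
    convert hD using 1
    rw [e1, e2, e3, e4]; push_cast; ring
  have hmono : MonotoneOn Φ (Set.Icc w U) := by
    apply monotoneOn_of_deriv_nonneg (convex_Icc w U)
    · intro t ht
      exact (hderiv t (lt_of_lt_of_le hw ht.1)).continuousAt.continuousWithinAt
    · intro t ht
      rw [interior_Icc] at ht
      exact (hderiv t (hw.trans ht.1)).differentiableAt.differentiableWithinAt
    · intro t ht
      rw [interior_Icc] at ht
      rw [(hderiv t (hw.trans ht.1)).deriv]
      have h1 : (0:ℝ) ≤ p - 1 := by linarith
      have h2 : (0:ℝ) ≤ p - 2 := by linarith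
      have h3 : (0:ℝ) ≤ t - w := by linarith [ht.1]
      have h4 : (0:ℝ) ≤ t ^ (p - 3) := Real.rpow_nonneg (by linarith [ht.1, hw] : (0:ℝ) ≤ t) _
      positivity
  have key := hmono (Set.left_mem_Icc.mpr hwU) (Set.right_mem_Icc.mpr hwU) hwU
  have hΦw : Φ w = 0 := by simp [hΦdef]
  have hΦU : Φ U = w ^ p - U ^ p + p * (U ^ (p - 1) * (U - w))
      - (p - 1) * (U ^ (p - 2) * (U - w) ^ 2) := rfl
  rw [hΦw, hΦU] at key
  linarith

/-- Taylor-type estimate used for the factor `A`: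
for `0 < U ≤ v` and `2 ≤ p`,
`(p(p-1)/2) U^(p-2) (v-U)^2 ≤ v^p - U^p - p U^(p-1) (v-U)`. -/
lemma stmt8_lemA (p U v : ℝ) (hU : 0 < U) (hUv : U ≤ v) (hp : 2 ≤ p) :
    p * (p - 1) / 2 * U ^ (p - 2) * (v - U) ^ 2 ≤ v ^ p - U ^ p - p * U ^ (p - 1) * (v - U) := by
  rcases eq_or_lt_of_le hUv with rfl | hlt
  · simp
  set Ψ : ℝ → ℝ := fun t =>
    v ^ p - t ^ p - p * (t ^ (p - 1) * (v - t))
      - p * (p - 1) / 2 * (t ^ (p - 2) * (v - t) ^ 2) with hΨdef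
  have hderiv : ∀ t : ℝ, 0 < t →
      HasDerivAt Ψ (-(p * (p - 1) * (p - 2) / 2) * t ^ (p - 3) * (v - t) ^ 2) t := by
    intro t ht
    have hid : HasDerivAt (fun x : ℝ => v - x) (-1) t := (hasDerivAt_id t).const_sub v
    have hsq : HasDerivAt (fun x : ℝ => (v - x) ^ 2) ((2 : ℕ) * (v - t) ^ 1 * (-1)) t := hid.pow 2
    have h1 : HasDerivAt (fun x : ℝ => x ^ p) (p * t ^ (p - 1)) t :=
      Real.hasDerivAt_rpow_const (Or.inl ht.ne')
    have h2 : HasDerivAt (fun x : ℝ => x ^ (p - 1)) ((p - 1) * t ^ (p - 1 - 1)) t :=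
      Real.hasDerivAt_rpow_const (Or.inl ht.ne')
    have h3 : HasDerivAt (fun x : ℝ => x ^ (p - 2)) ((p - 2) * t ^ (p - 2 - 1)) t :=
      Real.hasDerivAt_rpow_const (Or.inl ht.ne')
    have hD : HasDerivAt Ψ
        (0 - p * t ^ (p - 1) - p * ((p - 1) * t ^ (p - 1 - 1) * (v - t) + t ^ (p - 1) * (-1))
          - p * (p - 1) / 2 * ((p - 2) * t ^ (p - 2 - 1) * (v - t) ^ 2
            + t ^ (p - 2) * ((2 : ℕ) * (v - t) ^ 1 * (-1)))) t := by
      exact (((hasDerivAt_const t (v ^ p)).sub h1).sub ((h2.mul hid).const_mul p)).sub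
        ((h3.mul hsq).const_mul (p * (p - 1) / 2))
    have e1 : t ^ (p - 1) = t ^ (p - 3) * t * t := by
      rw [show p - 1 = p - 3 + 1 + 1 by ring, Real.rpow_add ht, Real.rpow_add ht, Real.rpow_one]
    have e2 : t ^ (p - 2) = t ^ (p - 3) * t := by
      rw [show p - 2 = p - 3 + 1 by ring, Real.rpow_add ht, Real.rpow_one]
    have e3 : t ^ (p - 1 - 1) = t ^ (p - 3) * t := by
      rw [show p - 1 - 1 = p - 3 + 1 by ring, Real.rpow_add ht, Real.rpow_one]
    have e4 : t ^ (p - 2 - 1) = t ^ (p - 3) := by rw [show p - 2 - 1 = p - 3 by ring]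
    convert hD using 1
    rw [e1, e2, e3, e4]; push_cast; ring
  have hmono : AntitoneOn Ψ (Set.Icc U v) := by
    apply antitoneOn_of_deriv_nonpos (convex_Icc U v)
    · intro t ht
      exact (hderiv t (lt_of_lt_of_le hU ht.1)).continuousAt.continuousWithinAt
    · intro t ht
      rw [interior_Icc] at ht
      exact (hderiv t (hU.trans ht.1)).differentiableAt.differentiableWithinAt
    · intro t ht
      rw [interior_Icc] at ht
      rw [(hderiv t (hU.trans ht.1)).deriv]
      have h1 : (0:ℝ) ≤ p - 2 := by linarith
      have h2 : (0:ℝ) ≤ t ^ (p - 3) := Real.rpow_nonneg (by linarith [ht.1, hU] : (0:ℝ) ≤ t) _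
      have h3 : (0:ℝ) ≤ (v - t) ^ 2 := sq_nonneg _
      nlinarith [mul_nonneg (mul_nonneg (mul_nonneg (by linarith : (0:ℝ) ≤ p)
        (by linarith : (0:ℝ) ≤ p - 1)) h1) (mul_nonneg h2 h3)]
  have key := hmono (Set.left_mem_Icc.mpr hUv) (Set.right_mem_Icc.mpr hUv) hUv
  have hΨv : Ψ v = 0 := by simp [hΨdef]
  have hΨU : Ψ U = v ^ p - U ^ p - p * (U ^ (p - 1) * (v - U))
      - p * (p - 1) / 2 * (U ^ (p - 2) * (v - U) ^ 2) := rfl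
  rw [hΨv, hΨU] at key
  linarith

/-- Strict version of the `B`-estimate at `p = 4`. -/
lemma stmt8_lemB4 (w U : ℝ) (hw : 0 < w) (hwU : w < U) :
    3 * U ^ 2 * (U - w) ^ 2 < w ^ 4 - U ^ 4 + 4 * U ^ 3 * (U - w) := by
  have hd : 0 < U - w := sub_pos.mpr hwU
  nlinarith [mul_pos (mul_pos hw (pow_pos hd 2)) (by linarith : (0:ℝ) < 2 * U + w)]

/-- For `f(u) = u^p`, `p ∈ [2,4]`, `0 < u₊ < u₋`, `s` the Rankine–Hugoniot speed and
`h(U) = -s(U-u₊) + f(U) - f(u₊)`, the quantity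
`m(U) = (U-u₋)(u₊-U)(h h'' - (h')²) + 3h² + h h'(u₊+u₋-2U)` is positive on `(u₊,u₋)`.
Here `uP` denotes `u₊` and `uM` denotes `u₋`. -/
theorem stmt_8 (p uP uM : ℝ) (hp : p ∈ Set.Icc (2 : ℝ) 4) (hup : 0 < uP) (hlt : uP < uM)
    (f : ℝ → ℝ) (hf : ∀ u : ℝ, f u = u ^ p)
    (s : ℝ) (hs : s = (f uP - f uM) / (uP - uM))
    (h h' h'' m : ℝ → ℝ)
    (hh : ∀ U : ℝ, h U = -s * (U - uP) + f U - f uP)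
    (hh' : ∀ U : ℝ, h' U = -s + p * U ^ (p - 1))
    (hh'' : ∀ U : ℝ, h'' U = p * (p - 1) * U ^ (p - 2))
    (hm : ∀ U : ℝ, m U = (U - uM) * (uP - U) * (h U * h'' U - (h' U) ^ 2)
      + 3 * (h U) ^ 2 + h U * h' U * (uP + uM - 2 * U)) :
    ∀ U ∈ Set.Ioo uP uM, 0 < m U := by
  rintro U ⟨hUP, hUM⟩
  have hp2 : 2 ≤ p := hp.1
  have hp4 : p ≤ 4 := hp.2
  have hU0 : 0 < U := hup.trans hUP
  have hc : 0 < uM - U := sub_pos.mpr hUM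
  have hd : 0 < U - uP := sub_pos.mpr hUP
  have hX : 0 < U ^ (p - 2) := Real.rpow_pos_of_pos hU0 _
  -- Rankine–Hugoniot relation
  have hne : uP - uM ≠ 0 := sub_ne_zero.mpr hlt.ne
  have hs' : s * (uM - uP) = uM ^ p - uP ^ p := by
    rw [hs, hf, hf]; field_simp; ring
  -- the two factors
  have hA : h U + (uM - U) * h' U
      = -(uM ^ p - U ^ p - p * U ^ (p - 1) * (uM - U)) := by
    rw [hh, hh', hf, hf]
    linear_combination -hs'
  have hB : h U + (uP - U) * h' U
      = -(uP ^ p - U ^ p + p * U ^ (p - 1) * (U - uP)) := by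
    rw [hh, hh', hf, hf]; ring
  -- estimates on the factors
  have ha : p * (p - 1) / 2 * U ^ (p - 2) * (uM - U) ^ 2
      ≤ uM ^ p - U ^ p - p * U ^ (p - 1) * (uM - U) :=
    stmt8_lemA p U uM hU0 hUM.le hp2
  have hb : p * (p - 1) * U ^ (p - 2) / 4 * (U - uP) ^ 2
      < uP ^ p - U ^ p + p * U ^ (p - 1) * (U - uP) := by
    rcases lt_or_eq_of_le hp4 with hp4' | hp4'
    · have hBle := stmt8_lemB p uP U hup hUP.le hp2
      have hpos : 0 < (p - 1) * U ^ (p - 2) * (U - uP) ^ 2 := by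
        have : (0:ℝ) < p - 1 := by linarith
        positivity
      nlinarith [mul_pos hpos (by linarith : (0:ℝ) < 4 - p)]
    · subst hp4'
      have e4 : U ^ (4:ℝ) = U ^ (4:ℕ) := by
        rw [show (4:ℝ) = ((4:ℕ):ℝ) by norm_num, Real.rpow_natCast]
      have e4' : uP ^ (4:ℝ) = uP ^ (4:ℕ) := by
        rw [show (4:ℝ) = ((4:ℕ):ℝ) by norm_num, Real.rpow_natCast]
      have e3 : U ^ ((4:ℝ) - 1) = U ^ (3:ℕ) := by
        rw [show (4:ℝ) - 1 = ((3:ℕ):ℝ) by norm_num, Real.rpow_natCast]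
      have e2 : U ^ ((4:ℝ) - 2) = U ^ (2:ℕ) := by
        rw [show (4:ℝ) - 2 = ((2:ℕ):ℝ) by norm_num, Real.rpow_natCast]
      rw [e4, e4', e3, e2]
      have := stmt8_lemB4 uP U hup hUP
      nlinarith [this]
  -- positivity of the product of the two factors
  have ha0 : 0 < uM ^ p - U ^ p - p * U ^ (p - 1) * (uM - U) := by
    have hpos : 0 < p * (p - 1) / 2 * U ^ (p - 2) * (uM - U) ^ 2 := by
      have h1 : (0:ℝ) < p - 1 := by linarith
      have h2 : (0:ℝ) < p := by linarith
      positivity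
    linarith
  have hb0 : 0 ≤ p * (p - 1) * U ^ (p - 2) / 4 * (U - uP) ^ 2 := by
    have h1 : (0:ℝ) ≤ p - 1 := by linarith
    have h2 : (0:ℝ) ≤ p := by linarith
    positivity
  have hprod : p * (p - 1) / 2 * U ^ (p - 2) * (uM - U) ^ 2
        * (p * (p - 1) * U ^ (p - 2) / 4 * (U - uP) ^ 2)
      < (uM ^ p - U ^ p - p * U ^ (p - 1) * (uM - U))
        * (uP ^ p - U ^ p + p * U ^ (p - 1) * (U - uP)) :=
    mul_lt_mul' ha hb hb0 ha0
  -- the decomposition of m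
  have hmId : m U = (h U + (uM - U) * h' U) * (h U + (uP - U) * h' U)
      + (U - uM) * (uP - U) * (h U * h'' U) + 2 * (h U) ^ 2 := by
    rw [hm]; ring
  rw [hmId, hA, hB, hh'']
  nlinarith [hprod, sq_nonneg (h U + p * (p - 1) * U ^ (p - 2) * ((uM - U) * (U - uP)) / 4)]
end

section
/- Let f(u)=u^p with p∈[2,4], 0<u_+<u_-, a(U) the weight function, h(U) as above, and define g(U) = 2a(U)²/(u_+-u_-) + a(U)f''(U)/2 + [a''(U)/2 - (a'(U))²/a(U)]·h(U). Then there exists β=β(u_+,u_-,p)>0 such that g(U) ≤ -β for all U∈[u_+,u_-]. -/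
lemma klem_one {p t : ℝ} (hp2 : 2 ≤ p) (hp4 : p ≤ 4) (ht0 : 0 < t) (ht1 : t ≤ 1) :
    0 ≤ t ^ p - 1 + p * (1 - t)
      - p * (p - 1) * (t ^ 2 * (1 - t) ^ 2 / 2 + 2 / 3 * t * (1 - t) ^ 3 + (1 - t) ^ 4 / 4) := by
  set K : ℝ → ℝ := fun s => s ^ p - 1 + p * (1 - s)
      - p * (p - 1) * (s ^ 2 * (1 - s) ^ 2 / 2 + 2 / 3 * s * (1 - s) ^ 3 + (1 - s) ^ 4 / 4) with hK
  set K' : ℝ → ℝ := fun s => p * s ^ (p - 1) - p + p * (p - 1) * (1 - s ^ 3) / 3 with hK'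
  have hdK : ∀ s : ℝ, 0 < s → HasDerivAt K (K' s) s := by
    intro s hs
    have h1 : HasDerivAt (fun z : ℝ => z ^ p) (p * s ^ (p - 1)) s :=
      Real.hasDerivAt_rpow_const (Or.inl hs.ne')
    have hid := hasDerivAt_id s
    have h1ms : HasDerivAt (fun z : ℝ => 1 - z) (-1) s := hid.const_sub 1
    have hz2 : HasDerivAt (fun z : ℝ => z ^ 2) (2 * s) s := by
      simpa using hasDerivAt_pow 2 s
    have hm2 : HasDerivAt (fun z : ℝ => (1 - z) ^ 2) (2 * (1 - s) * (-1)) s := by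
      simpa using h1ms.fun_pow 2
    have hm3 : HasDerivAt (fun z : ℝ => (1 - z) ^ 3) (3 * (1 - s) ^ 2 * (-1)) s := by
      simpa using h1ms.fun_pow 3
    have hm4 : HasDerivAt (fun z : ℝ => (1 - z) ^ 4) (4 * (1 - s) ^ 3 * (-1)) s := by
      simpa using h1ms.fun_pow 4
    have hR : HasDerivAt
        (fun z : ℝ => z ^ 2 * (1 - z) ^ 2 / 2 + 2 / 3 * z * (1 - z) ^ 3 + (1 - z) ^ 4 / 4)
        (-(1 - s ^ 3) / 3) s := by
      have := (((hz2.fun_mul hm2).div_const 2).fun_add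
        (((hid.const_mul (2/3:ℝ)).fun_mul hm3))).fun_add (hm4.div_const 4)
      convert! this using 1
      simp only [id_eq]
      ring
    have := ((h1.sub_const 1).fun_add (h1ms.const_mul p)).fun_sub (hR.const_mul (p * (p - 1)))
    convert! this using 1
    ring
  -- K' s ≤ 0 for s in (0, 1]
  have hK'le : ∀ s : ℝ, 0 < s → s ≤ 1 → K' s ≤ 0 := by
    intro s hs hs1
    have hK'1 : K' 1 = 0 := by simp [hK', Real.one_rpow]
    rcases eq_or_lt_of_le hs1 with rfl | hs1'
    · exact le_of_eq hK'1
    have hdK' : ∀ σ : ℝ, 0 < σ →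
        HasDerivAt K' (p * (p - 1) * σ ^ (p - 2) - p * (p - 1) * σ ^ 2) σ := by
      intro σ hσ
      have h1 : HasDerivAt (fun z : ℝ => z ^ (p - 1)) ((p - 1) * σ ^ (p - 1 - 1)) σ :=
        Real.hasDerivAt_rpow_const (Or.inl hσ.ne')
      have he : p - 1 - 1 = p - 2 := by ring
      rw [he] at h1
      have h3 : HasDerivAt (fun z : ℝ => z ^ 3) (3 * σ ^ 2) σ := by
        simpa using hasDerivAt_pow 3 σ
      have := ((h1.const_mul p).sub_const p).fun_add
        (((h3.const_sub 1).const_mul (p * (p - 1))).div_const 3)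
      convert! this using 1
      ring
    have hmono : MonotoneOn K' (Set.Icc s 1) := by
      refine monotoneOn_of_deriv_nonneg (convex_Icc s 1) ?_ ?_ ?_
      · intro σ hσ
        exact ((hdK' σ (lt_of_lt_of_le hs hσ.1)).continuousAt).continuousWithinAt
      · intro σ hσ
        rw [interior_Icc] at hσ
        exact ((hdK' σ (lt_trans hs hσ.1)).differentiableAt).differentiableWithinAt
      · intro σ hσ
        rw [interior_Icc] at hσ
        have hσ0 : 0 < σ := lt_trans hs hσ.1
        rw [(hdK' σ hσ0).deriv]
        have h2 : σ ^ (2:ℝ) ≤ σ ^ (p - 2) := by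
          apply Real.rpow_le_rpow_of_exponent_ge hσ0 (le_of_lt hσ.2)
          linarith
        rw [show σ ^ (2:ℝ) = σ ^ (2:ℕ) by rw [← Real.rpow_natCast]; norm_num] at h2
        have hpp : 0 ≤ p * (p - 1) := by nlinarith
        nlinarith
    have := hmono (Set.mem_Icc.mpr ⟨le_refl s, hs1⟩) (Set.mem_Icc.mpr ⟨hs1, le_refl 1⟩) hs1
    linarith [hK'1 ▸ this]
  -- K antitone on [t, 1]
  have hanti : AntitoneOn K (Set.Icc t 1) := by
    refine antitoneOn_of_deriv_nonpos (convex_Icc t 1) ?_ ?_ ?_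
    · intro s hs
      exact ((hdK s (lt_of_lt_of_le ht0 hs.1)).continuousAt).continuousWithinAt
    · intro s hs
      rw [interior_Icc] at hs
      exact ((hdK s (lt_trans ht0 hs.1)).differentiableAt).differentiableWithinAt
    · intro s hs
      rw [interior_Icc] at hs
      have hs0 : 0 < s := lt_trans ht0 hs.1
      rw [(hdK s hs0).deriv]
      exact hK'le s hs0 (le_of_lt hs.2)
  have hK1 : K 1 = 0 := by simp [hK, Real.one_rpow]
  have := hanti (Set.mem_Icc.mpr ⟨le_refl t, ht1⟩) (Set.mem_Icc.mpr ⟨ht1, le_refl 1⟩) ht1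
  rw [hK1] at this
  exact this


lemma klem_two {p t : ℝ} (hp2 : 2 ≤ p) (ht : 1 ≤ t) :
    0 ≤ t ^ p - 1 - p * (t - 1) - p * (p - 1) / 2 * (t - 1) ^ 2 := by
  set K : ℝ → ℝ := fun s => s ^ p - 1 - p * (s - 1) - p * (p - 1) / 2 * (s - 1) ^ 2 with hK
  set K' : ℝ → ℝ := fun s => p * s ^ (p - 1) - p - p * (p - 1) * (s - 1) with hK'
  have hdK : ∀ s : ℝ, 0 < s → HasDerivAt K (K' s) s := by
    intro s hs
    have h1 : HasDerivAt (fun z : ℝ => z ^ p) (p * s ^ (p - 1)) s :=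
      Real.hasDerivAt_rpow_const (Or.inl hs.ne')
    have hid := hasDerivAt_id s
    have h2 : HasDerivAt (fun z : ℝ => (z - 1) ^ 2) (2 * (s - 1)) s := by
      simpa using (hid.sub_const 1).fun_pow 2
    have := ((h1.sub_const 1).fun_sub ((hid.sub_const 1).const_mul p)).fun_sub
      (h2.const_mul (p * (p - 1) / 2))
    convert! this using 1
    ring
  have hdK' : ∀ σ : ℝ, 0 < σ →
      HasDerivAt K' (p * (p - 1) * σ ^ (p - 2) - p * (p - 1)) σ := by
    intro σ hσ
    have h1 : HasDerivAt (fun z : ℝ => z ^ (p - 1)) ((p - 1) * σ ^ (p - 1 - 1)) σ :=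
      Real.hasDerivAt_rpow_const (Or.inl hσ.ne')
    have he : p - 1 - 1 = p - 2 := by ring
    rw [he] at h1
    have := ((h1.const_mul p).sub_const p).fun_sub
      (((hasDerivAt_id σ).sub_const 1).const_mul (p * (p - 1)))
    convert! this using 1
    ring
  have hK'1 : K' 1 = 0 := by simp [hK', Real.one_rpow]
  have hK'ge : ∀ s : ℝ, 1 ≤ s → 0 ≤ K' s := by
    intro s hs
    have hmono : MonotoneOn K' (Set.Icc 1 s) := by
      refine monotoneOn_of_deriv_nonneg (convex_Icc 1 s) ?_ ?_ ?_
      · intro σ hσ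
        exact ((hdK' σ (lt_of_lt_of_le one_pos hσ.1)).continuousAt).continuousWithinAt
      · intro σ hσ
        rw [interior_Icc] at hσ
        exact ((hdK' σ (lt_trans one_pos hσ.1)).differentiableAt).differentiableWithinAt
      · intro σ hσ
        rw [interior_Icc] at hσ
        have hσ1 : 1 ≤ σ := le_of_lt hσ.1
        rw [(hdK' σ (lt_of_lt_of_le one_pos hσ1)).deriv]
        have h2 : (1:ℝ) ≤ σ ^ (p - 2) := Real.one_le_rpow hσ1 (by linarith)
        have hpp : 0 ≤ p * (p - 1) := by nlinarith
        nlinarith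
    have := hmono (Set.mem_Icc.mpr ⟨le_refl 1, hs⟩) (Set.mem_Icc.mpr ⟨hs, le_refl s⟩) hs
    linarith [hK'1 ▸ this]
  have hmonoK : MonotoneOn K (Set.Icc 1 t) := by
    refine monotoneOn_of_deriv_nonneg (convex_Icc 1 t) ?_ ?_ ?_
    · intro s hs
      exact ((hdK s (lt_of_lt_of_le one_pos hs.1)).continuousAt).continuousWithinAt
    · intro s hs
      rw [interior_Icc] at hs
      exact ((hdK s (lt_trans one_pos hs.1)).differentiableAt).differentiableWithinAt
    · intro s hs
      rw [interior_Icc] at hs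
      rw [(hdK s (lt_trans one_pos hs.1)).deriv]
      exact hK'ge s (le_of_lt hs.1)
  have hK1 : K 1 = 0 := by simp [hK, Real.one_rpow]
  have := hmonoK (Set.mem_Icc.mpr ⟨le_refl 1, ht⟩) (Set.mem_Icc.mpr ⟨ht, le_refl t⟩) ht
  rw [hK1] at this
  exact this


lemma xlem {p x y : ℝ} (hp2 : 2 ≤ p) (hp4 : p ≤ 4) (hy : 0 < y) (hyx : y < x) :
    p * (p - 1) * x ^ (p - 2) * (x - y) ^ 2 / 4 < y ^ p - x ^ p + p * x ^ (p - 1) * (x - y) := by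
  have hx : 0 < x := lt_trans hy hyx
  set t : ℝ := y / x with hts
  have ht0 : 0 < t := div_pos hy hx
  have ht1 : t < 1 := (div_lt_one hx).mpr hyx
  have hyp : y ^ p = t ^ p * x ^ p := by
    rw [hts, ← Real.mul_rpow (by positivity) hx.le, div_mul_cancel₀ _ hx.ne']
  have hxy : x - y = (1 - t) * x := by
    rw [hts]; field_simp
  have hxp1 : x ^ (p - 1) = x ^ p / x := Real.rpow_sub_one hx.ne' p
  have hxp2 : x ^ (p - 2) = x ^ p / x ^ 2 := by
    rw [show (2:ℝ) = ((2:ℕ):ℝ) by norm_num, Real.rpow_sub hx, Real.rpow_natCast]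
  have key := klem_one hp2 hp4 ht0 ht1.le
  have hA : (0:ℝ) < x ^ p := Real.rpow_pos_of_pos hx p
  rw [hyp, hxy, hxp1, hxp2]
  have hrhs : t ^ p * x ^ p - x ^ p + p * (x ^ p / x) * ((1 - t) * x)
      = (t ^ p - 1 + p * (1 - t)) * x ^ p := by field_simp
  have hlhs : p * (p - 1) * (x ^ p / x ^ 2) * ((1 - t) * x) ^ 2 / 4
      = (p * (p - 1) * (1 - t) ^ 2 / 4) * x ^ p := by field_simp
  rw [hrhs, hlhs]
  apply mul_lt_mul_of_pos_right _ hA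
  nlinarith [mul_pos (mul_pos (by nlinarith : (0:ℝ) < p * (p - 1)) ht0)
    (pow_pos (by linarith : (0:ℝ) < 1 - t) 3),
    mul_nonneg (mul_nonneg (by nlinarith : (0:ℝ) ≤ p * (p - 1)) (sq_nonneg t))
    (sq_nonneg (1 - t))]

lemma ylem {p x b : ℝ} (hp2 : 2 ≤ p) (hx : 0 < x) (hxb : x < b) :
    p * (p - 1) * x ^ (p - 2) * (b - x) ^ 2 / 2 ≤ b ^ p - x ^ p - p * x ^ (p - 1) * (b - x) := by
  set t : ℝ := b / x with hts
  have ht1 : 1 < t := (one_lt_div hx).mpr hxb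
  have hbp : b ^ p = t ^ p * x ^ p := by
    rw [hts, ← Real.mul_rpow (by positivity) hx.le, div_mul_cancel₀ _ hx.ne']
  have hbx : b - x = (t - 1) * x := by rw [hts]; field_simp
  have hxp1 : x ^ (p - 1) = x ^ p / x := Real.rpow_sub_one hx.ne' p
  have hxp2 : x ^ (p - 2) = x ^ p / x ^ 2 := by
    rw [show (2:ℝ) = ((2:ℕ):ℝ) by norm_num, Real.rpow_sub hx, Real.rpow_natCast]
  have key := klem_two hp2 ht1.le
  have hA : (0:ℝ) < x ^ p := Real.rpow_pos_of_pos hx p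
  rw [hbp, hbx, hxp1, hxp2]
  have hrhs : t ^ p * x ^ p - x ^ p - p * (x ^ p / x) * ((t - 1) * x)
      = (t ^ p - 1 - p * (t - 1)) * x ^ p := by field_simp
  have hlhs : p * (p - 1) * (x ^ p / x ^ 2) * ((t - 1) * x) ^ 2 / 2
      = (p * (p - 1) / 2 * (t - 1) ^ 2) * x ^ p := by field_simp
  rw [hrhs, hlhs]
  apply mul_le_mul_of_nonneg_right _ hA.le
  linarith


lemma interior_alg {u w c X Y Q av a1 a2 hval : ℝ} (hu : u ≠ 0) (hw : w ≠ 0)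
    (hcne : c ≠ 0) (hav : av ≠ 0) (hc : c = u + w)
    (e1 : av = u * X + w * Y) (e2 : a1 = Y - X)
    (e3 : a2 = (2 * Y - Q) / w + (2 * X - Q) / u) (e4 : hval = -(u * w * av) / c) :
    2 * av ^ 2 / (-c) + av * Q / 2 + (a2 / 2 - a1 ^ 2 / av) * hval
      = -(2 * av ^ 2 - c * Q * av + c ^ 2 * X * Y) / c := by
  subst e2 e3 e4 hc
  rw [e1] at hav ⊢
  rw [div_neg]
  field_simp
  ring

lemma interior_pos {u w c X Y Q av : ℝ} (hu : 0 < u) (hw : 0 < w) (hQ : 0 < Q)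
    (hX : Q / 4 < X) (hY : Q / 2 ≤ Y) (hc : c = u + w) (e1 : av = u * X + w * Y) :
    0 < 2 * av ^ 2 - c * Q * av + c ^ 2 * X * Y := by
  have hXY : Q ^ 2 / 8 ≤ X * Y := by nlinarith
  have hd : w * Q / 4 ≤ av - c * Q / 4 := by rw [e1, hc]; nlinarith
  have hd0 : 0 < av - c * Q / 4 := lt_of_lt_of_le (by positivity) hd
  nlinarith [mul_pos hd0 hd0, sq_nonneg c, mul_nonneg (sq_nonneg c) (sub_nonneg.mpr hXY)]


noncomputable def XXd (p uP V : ℝ) : ℝ :=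
  (uP ^ p - V ^ p + p * V ^ (p - 1) * (V - uP)) / (V - uP) ^ 2

noncomputable def YYd (p uM V : ℝ) : ℝ :=
  (uM ^ p - V ^ p - p * V ^ (p - 1) * (uM - V)) / (uM - V) ^ 2

noncomputable def QQd (p V : ℝ) : ℝ := p * (p - 1) * V ^ (p - 2)

lemma QQd_pos {p V : ℝ} (hp2 : 2 ≤ p) (hV : 0 < V) : 0 < QQd p V := by
  have := Real.rpow_pos_of_pos hV (p - 2)
  have h1 : 0 < p * (p - 1) := by nlinarith
  exact mul_pos h1 this

lemma XX_gt {p uP V : ℝ} (hp2 : 2 ≤ p) (hp4 : p ≤ 4) (huP : 0 < uP) (hV : uP < V) :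
    QQd p V / 4 < XXd p uP V := by
  have hu : 0 < V - uP := sub_pos.mpr hV
  have hx := xlem hp2 hp4 huP hV
  rw [XXd, lt_div_iff₀ (pow_pos hu 2), QQd]
  nlinarith [hx]

lemma YY_ge {p uM V : ℝ} (hp2 : 2 ≤ p) (hV : 0 < V) (hVM : V < uM) :
    QQd p V / 2 ≤ YYd p uM V := by
  have hw : 0 < uM - V := sub_pos.mpr hVM
  have hy := ylem hp2 hV hVM
  rw [YYd, le_div_iff₀ (pow_pos hw 2), QQd]
  nlinarith [hy]

lemma AA_eq {p uP uM V : ℝ} (hu : V - uP ≠ 0) (hw : uM - V ≠ 0) :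
    (V ^ p - uM ^ p) / (V - uM) - (V ^ p - uP ^ p) / (V - uP)
      = (V - uP) * XXd p uP V + (uM - V) * YYd p uM V := by
  have hw' : V - uM ≠ 0 := fun hh => hw (by linarith [sub_eq_zero.mp hh])
  rw [XXd, YYd]
  field_simp
  ring

lemma h_eq {p uP uM V : ℝ} (hu : V - uP ≠ 0) (hw : uM - V ≠ 0) (hc : uM - uP ≠ 0) :
    -((uP ^ p - uM ^ p) / (uP - uM)) * (V - uP) + V ^ p - uP ^ p
      = -((V - uP) * (uM - V) * ((V - uP) * XXd p uP V + (uM - V) * YYd p uM V)) / (uM - uP) := by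
  have hc' : uP - uM ≠ 0 := fun hh => hc (by linarith [sub_eq_zero.mp hh])
  rw [XXd, YYd]
  field_simp
  ring

lemma aM_eq {p uP uM : ℝ} (hc : uM - uP ≠ 0) :
    p * uM ^ (p - 1) - (uM ^ p - uP ^ p) / (uM - uP) = (uM - uP) * XXd p uP uM := by
  rw [XXd]
  field_simp
  ring

lemma aP_eq {p uP uM : ℝ} (hc : uM - uP ≠ 0) :
    (uP ^ p - uM ^ p) / (uP - uM) - p * uP ^ (p - 1) = (uM - uP) * YYd p uM uP := by
  have hc' : uP - uM ≠ 0 := fun hh => hc (by linarith [sub_eq_zero.mp hh])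
  rw [YYd]
  field_simp
  ring

lemma hasDerivAt_AA' (p uP uM : ℝ) {V : ℝ} (hV : 0 < V) (hneP : V - uP ≠ 0)
    (hneM : uM - V ≠ 0) :
    HasDerivAt (fun z : ℝ => (z ^ p - uM ^ p) / (z - uM) - (z ^ p - uP ^ p) / (z - uP))
      (YYd p uM V - XXd p uP V) V := by
  have hrp : HasDerivAt (fun z : ℝ => z ^ p) (p * V ^ (p - 1)) V :=
    Real.hasDerivAt_rpow_const (Or.inl hV.ne')
  have hneM' : V - uM ≠ 0 := fun h => hneM (by linarith [sub_eq_zero.mp h])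
  have h1 : HasDerivAt (fun z : ℝ => (z ^ p - uM ^ p) / (z - uM))
      ((p * V ^ (p - 1) * (V - uM) - (V ^ p - uM ^ p) * 1) / (V - uM) ^ 2) V :=
    (hrp.sub_const _).div ((hasDerivAt_id V).sub_const uM) hneM'
  have h2 : HasDerivAt (fun z : ℝ => (z ^ p - uP ^ p) / (z - uP))
      ((p * V ^ (p - 1) * (V - uP) - (V ^ p - uP ^ p) * 1) / (V - uP) ^ 2) V :=
    (hrp.sub_const _).div ((hasDerivAt_id V).sub_const uP) hneP
  convert! h1.fun_sub h2 using 1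
  rw [YYd, XXd]
  have e1 : (V - uM) ^ 2 = (uM - V) ^ 2 := by ring
  rw [e1]
  congr 1
  · congr 1; ring
  · congr 1; ring

lemma hasDerivAt_XXd (p uP : ℝ) {V : ℝ} (hV : 0 < V) (hne : V - uP ≠ 0) :
    HasDerivAt (fun z : ℝ => XXd p uP z) ((QQd p V - 2 * XXd p uP V) / (V - uP)) V := by
  have hrp : HasDerivAt (fun z : ℝ => z ^ p) (p * V ^ (p - 1)) V :=
    Real.hasDerivAt_rpow_const (Or.inl hV.ne')
  have hrp1 : HasDerivAt (fun z : ℝ => z ^ (p - 1)) ((p - 1) * V ^ (p - 2)) V := by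
    have := Real.hasDerivAt_rpow_const (x := V) (p := p - 1) (Or.inl hV.ne')
    rwa [show p - 1 - 1 = p - 2 by ring] at this
  have hnum : HasDerivAt (fun z : ℝ => uP ^ p - z ^ p + p * z ^ (p - 1) * (z - uP))
      (-(p * V ^ (p - 1)) + ((p * ((p - 1) * V ^ (p - 2))) * (V - uP)
        + p * V ^ (p - 1) * 1)) V :=
    ((hrp.const_sub _).fun_add (((hrp1.const_mul p)).fun_mul ((hasDerivAt_id V).sub_const uP)))
  have hden : HasDerivAt (fun z : ℝ => (z - uP) ^ 2) (2 * (V - uP)) V := by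
    simpa using ((hasDerivAt_id V).sub_const uP).fun_pow 2
  have hden_ne : (V - uP) ^ 2 ≠ 0 := pow_ne_zero 2 hne
  have := hnum.fun_div hden hden_ne
  simp only [XXd, QQd]
  convert! this using 1
  field_simp
  ring

lemma hasDerivAt_YYd (p uM : ℝ) {V : ℝ} (hV : 0 < V) (hne : uM - V ≠ 0) :
    HasDerivAt (fun z : ℝ => YYd p uM z) ((2 * YYd p uM V - QQd p V) / (uM - V)) V := by
  have hrp : HasDerivAt (fun z : ℝ => z ^ p) (p * V ^ (p - 1)) V :=
    Real.hasDerivAt_rpow_const (Or.inl hV.ne')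
  have hrp1 : HasDerivAt (fun z : ℝ => z ^ (p - 1)) ((p - 1) * V ^ (p - 2)) V := by
    have := Real.hasDerivAt_rpow_const (x := V) (p := p - 1) (Or.inl hV.ne')
    rwa [show p - 1 - 1 = p - 2 by ring] at this
  have hnum : HasDerivAt (fun z : ℝ => uM ^ p - z ^ p - p * z ^ (p - 1) * (uM - z))
      (-(p * V ^ (p - 1)) - ((p * ((p - 1) * V ^ (p - 2))) * (uM - V)
        + p * V ^ (p - 1) * (-1))) V :=
    ((hrp.const_sub _).fun_sub (((hrp1.const_mul p)).fun_mul ((hasDerivAt_id V).const_sub uM)))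
  have hden : HasDerivAt (fun z : ℝ => (uM - z) ^ 2) (2 * (uM - V) * (-1)) V := by
    simpa using ((hasDerivAt_id V).const_sub uM).fun_pow 2
  have hden_ne : (uM - V) ^ 2 ≠ 0 := pow_ne_zero 2 hne
  have := hnum.fun_div hden hden_ne
  simp only [YYd, QQd]
  convert! this using 1
  field_simp
  ring

lemma hasDerivAt_A'd (p uP uM : ℝ) {V : ℝ} (hV : 0 < V) (hneP : V - uP ≠ 0)
    (hneM : uM - V ≠ 0) :
    HasDerivAt (fun z : ℝ => YYd p uM z - XXd p uP z)
      ((2 * YYd p uM V - QQd p V) / (uM - V) + (2 * XXd p uP V - QQd p V) / (V - uP)) V := by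
  have := (hasDerivAt_YYd p uM hV hneM).fun_sub (hasDerivAt_XXd p uP hV hneP)
  convert! this using 1
  ring


/-- For `f(u) = u^p` with `p ∈ [2,4]`, `0 < u₊ < u₋`, the weight function
`a(U) = (f(U)-f(u₋))/(U-u₋) - (f(U)-f(u₊))/(U-u₊)` (extended continuously to `[u₊,u₋]`,
with derivatives `a'`, `a''`), and `h(U) = -s(U-u₊)+f(U)-f(u₊)`, the quantity
`g(U) = 2a²/(u₊-u₋) + a f''/2 + [a''/2 - (a')²/a]·h` satisfies `g ≤ -β` on `[u₊,u₋]`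
for some `β = β(u₊,u₋,p) > 0`.  Here `uP` denotes `u₊` and `uM` denotes `u₋`. -/
theorem stmt_10 (p uP uM : ℝ) (hp : p ∈ Set.Icc (2 : ℝ) 4) (hup : 0 < uP) (hlt : uP < uM)
    (f : ℝ → ℝ) (hf : ∀ u : ℝ, f u = u ^ p)
    (s : ℝ) (hs : s = (f uP - f uM) / (uP - uM))
    (h : ℝ → ℝ) (hh : ∀ U : ℝ, h U = -s * (U - uP) + f U - f uP)
    (a a' a'' : ℝ → ℝ)
    (haf : ∀ U ∈ Set.Ioo uP uM,
      a U = (f U - f uM) / (U - uM) - (f U - f uP) / (U - uP))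
    (hacont : ContinuousOn a (Set.Icc uP uM))
    (ha'cont : ContinuousOn a' (Set.Icc uP uM))
    (ha''cont : ContinuousOn a'' (Set.Icc uP uM))
    (hda : ∀ U ∈ Set.Ioo uP uM, HasDerivAt a (a' U) U)
    (hda' : ∀ U ∈ Set.Ioo uP uM, HasDerivAt a' (a'' U) U)
    (g : ℝ → ℝ)
    (hg : ∀ U : ℝ, g U = 2 * (a U) ^ 2 / (uP - uM) + a U * (p * (p - 1) * U ^ (p - 2)) / 2
      + (a'' U / 2 - (a' U) ^ 2 / a U) * h U) :
    ∃ β > 0, ∀ U ∈ Set.Icc uP uM, g U ≤ -β := by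
  obtain ⟨hp2, hp4⟩ := hp
  have huM : 0 < uM := hup.trans hlt
  have hc0 : 0 < uM - uP := sub_pos.mpr hlt
  have hcne : uM - uP ≠ 0 := hc0.ne'
  have hcne' : uP - uM ≠ 0 := fun hq => hcne (by linarith [sub_eq_zero.mp hq])
  -- rewritten hypotheses
  have hs' : s = (uP ^ p - uM ^ p) / (uP - uM) := by rw [hs, hf, hf]
  have hh' : ∀ U : ℝ, h U = -s * (U - uP) + U ^ p - uP ^ p := fun U => by rw [hh U, hf, hf]
  have haf' : ∀ V ∈ Set.Ioo uP uM,
      a V = (V ^ p - uM ^ p) / (V - uM) - (V ^ p - uP ^ p) / (V - uP) := fun V hV => by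
    rw [haf V hV, hf, hf, hf]
  -- interior facts
  have hIoo : ∀ V ∈ Set.Ioo uP uM, 0 < V - uP ∧ 0 < uM - V ∧ 0 < V := by
    intro V hV
    exact ⟨sub_pos.mpr hV.1, sub_pos.mpr hV.2, hup.trans hV.1⟩
  have haXY : ∀ V ∈ Set.Ioo uP uM,
      a V = (V - uP) * XXd p uP V + (uM - V) * YYd p uM V := by
    intro V hV
    obtain ⟨hu, hw, _⟩ := hIoo V hV
    rw [haf' V hV, AA_eq hu.ne' hw.ne']
  have ha'eq : ∀ V ∈ Set.Ioo uP uM, a' V = YYd p uM V - XXd p uP V := by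
    intro V hV
    obtain ⟨hu, hw, hV0⟩ := hIoo V hV
    have hev : a =ᶠ[nhds V]
        (fun z : ℝ => (z ^ p - uM ^ p) / (z - uM) - (z ^ p - uP ^ p) / (z - uP)) :=
      Filter.eventuallyEq_of_mem (isOpen_Ioo.mem_nhds hV) (fun U hU => haf' U hU)
    exact (hda V hV).unique
      (((hasDerivAt_AA' p uP uM hV0 hu.ne' hw.ne')).congr_of_eventuallyEq hev)
  have ha''eq : ∀ V ∈ Set.Ioo uP uM,
      a'' V = (2 * YYd p uM V - QQd p V) / (uM - V) + (2 * XXd p uP V - QQd p V) / (V - uP) := by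
    intro V hV
    obtain ⟨hu, hw, hV0⟩ := hIoo V hV
    have hev : a' =ᶠ[nhds V] (fun z : ℝ => YYd p uM z - XXd p uP z) :=
      Filter.eventuallyEq_of_mem (isOpen_Ioo.mem_nhds hV) (fun U hU => ha'eq U hU)
    exact (hda' V hV).unique
      ((hasDerivAt_A'd p uP uM hV0 hu.ne' hw.ne').congr_of_eventuallyEq hev)
  have haposIoo : ∀ V ∈ Set.Ioo uP uM, 0 < a V := by
    intro V hV
    obtain ⟨hu, hw, hV0⟩ := hIoo V hV
    have hQ := QQd_pos hp2 hV0
    have hX := XX_gt hp2 hp4 hup hV.1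
    have hY := YY_ge hp2 hV0 hV.2
    rw [haXY V hV]
    have hX0 : 0 < XXd p uP V := by linarith
    have hY0 : 0 < YYd p uM V := by linarith
    positivity
  -- interior negativity
  have hgIoo : ∀ V ∈ Set.Ioo uP uM, g V < 0 := by
    intro V hV
    obtain ⟨hu, hw, hV0⟩ := hIoo V hV
    have e1 := haXY V hV
    have e2 := ha'eq V hV
    have e3 := ha''eq V hV
    have e4 : h V = -((V - uP) * (uM - V) * a V) / (uM - uP) := by
      rw [hh' V, hs', h_eq hu.ne' hw.ne' hcne, ← e1]
    have hav : a V ≠ 0 := (haposIoo V hV).ne'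
    have hgv : g V = -(2 * (a V) ^ 2 - (uM - uP) * QQd p V * a V
        + (uM - uP) ^ 2 * XXd p uP V * YYd p uM V) / (uM - uP) := by
      rw [hg V, show uP - uM = -(uM - uP) by ring,
        show p * (p - 1) * V ^ (p - 2) = QQd p V from rfl]
      exact interior_alg hu.ne' hw.ne' hcne hav (by ring) e1 e2 e3 e4
    rw [hgv, neg_div]
    have hpos := interior_pos hu hw (QQd_pos hp2 hV0) (XX_gt hp2 hp4 hup hV.1)
      (YY_ge hp2 hV0 hV.2) (show uM - uP = (V - uP) + (uM - V) by ring) e1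
    exact neg_lt_zero.mpr (div_pos hpos hc0)
  -- endpoint values of a
  have hMmem : uM ∈ Set.Icc uP uM := ⟨hlt.le, le_refl uM⟩
  have hPmem : uP ∈ Set.Icc uP uM := ⟨le_refl uP, hlt.le⟩
  have hneM : (nhdsWithin uM (Set.Ioo uP uM)).NeBot := by
    refine mem_closure_iff_nhdsWithin_neBot.mp ?_
    rw [closure_Ioo hlt.ne]
    exact hMmem
  have hneP : (nhdsWithin uP (Set.Ioo uP uM)).NeBot := by
    refine mem_closure_iff_nhdsWithin_neBot.mp ?_
    rw [closure_Ioo hlt.ne]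
    exact hPmem
  have haMval : a uM = (uM - uP) * XXd p uP uM := by
    haveI := hneM
    have h1 : Filter.Tendsto a (nhdsWithin uM (Set.Ioo uP uM)) (nhds (a uM)) :=
      (hacont uM hMmem).mono_left (nhdsWithin_mono uM Set.Ioo_subset_Icc_self)
    have hD : HasDerivAt (fun z : ℝ => z ^ p) (p * uM ^ (p - 1)) uM :=
      Real.hasDerivAt_rpow_const (Or.inl huM.ne')
    have hslope : Filter.Tendsto (fun V : ℝ => (V ^ p - uM ^ p) / (V - uM))
        (nhdsWithin uM (Set.Ioo uP uM)) (nhds (p * uM ^ (p - 1))) := by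
      have h2 := hasDerivAt_iff_tendsto_slope.mp hD
      have h3 := h2.mono_left
        (nhdsWithin_mono uM (fun x (hx : x ∈ Set.Ioo uP uM) => (ne_of_lt hx.2 : x ≠ uM)))
      refine h3.congr (fun V => ?_)
      simp [slope_def_field]
    have hcont2 : Filter.Tendsto (fun V : ℝ => (V ^ p - uP ^ p) / (V - uP))
        (nhdsWithin uM (Set.Ioo uP uM)) (nhds ((uM ^ p - uP ^ p) / (uM - uP))) := by
      have : ContinuousAt (fun V : ℝ => (V ^ p - uP ^ p) / (V - uP)) uM := by
        exact ((Real.continuousAt_rpow_const uM p (Or.inl huM.ne')).sub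
          continuousAt_const).div ((continuousAt_id.sub continuousAt_const)) hcne
      exact this.continuousWithinAt.tendsto
    have h4 : Filter.Tendsto a (nhdsWithin uM (Set.Ioo uP uM))
        (nhds (p * uM ^ (p - 1) - (uM ^ p - uP ^ p) / (uM - uP))) := by
      refine (hslope.sub hcont2).congr' ?_
      exact Filter.eventuallyEq_of_mem self_mem_nhdsWithin (fun V hV => (haf' V hV).symm)
    have := tendsto_nhds_unique h1 h4
    rw [this, aM_eq hcne]
  have haPval : a uP = (uM - uP) * YYd p uM uP := by
    haveI := hneP
    have h1 : Filter.Tendsto a (nhdsWithin uP (Set.Ioo uP uM)) (nhds (a uP)) :=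
      (hacont uP hPmem).mono_left (nhdsWithin_mono uP Set.Ioo_subset_Icc_self)
    have hD : HasDerivAt (fun z : ℝ => z ^ p) (p * uP ^ (p - 1)) uP :=
      Real.hasDerivAt_rpow_const (Or.inl hup.ne')
    have hslope : Filter.Tendsto (fun V : ℝ => (V ^ p - uP ^ p) / (V - uP))
        (nhdsWithin uP (Set.Ioo uP uM)) (nhds (p * uP ^ (p - 1))) := by
      have h2 := hasDerivAt_iff_tendsto_slope.mp hD
      have h3 := h2.mono_left
        (nhdsWithin_mono uP (fun x (hx : x ∈ Set.Ioo uP uM) => (ne_of_gt hx.1 : x ≠ uP)))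
      refine h3.congr (fun V => ?_)
      simp [slope_def_field]
    have hcont2 : Filter.Tendsto (fun V : ℝ => (V ^ p - uM ^ p) / (V - uM))
        (nhdsWithin uP (Set.Ioo uP uM)) (nhds ((uP ^ p - uM ^ p) / (uP - uM))) := by
      have : ContinuousAt (fun V : ℝ => (V ^ p - uM ^ p) / (V - uM)) uP := by
        exact ((Real.continuousAt_rpow_const uP p (Or.inl hup.ne')).sub
          continuousAt_const).div ((continuousAt_id.sub continuousAt_const)) hcne'
      exact this.continuousWithinAt.tendsto
    have h4 : Filter.Tendsto a (nhdsWithin uP (Set.Ioo uP uM))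
        (nhds ((uP ^ p - uM ^ p) / (uP - uM) - p * uP ^ (p - 1))) := by
      refine (hcont2.sub hslope).congr' ?_
      exact Filter.eventuallyEq_of_mem self_mem_nhdsWithin (fun V hV => (haf' V hV).symm)
    have := tendsto_nhds_unique h1 h4
    rw [this, aP_eq hcne]
  -- h at endpoints
  have hhP : h uP = 0 := by rw [hh' uP]; ring
  have hhM : h uM = 0 := by
    rw [hh' uM, hs']
    field_simp
    ring
  -- endpoint negativity and positivity of a
  have hXM := XX_gt hp2 hp4 hup hlt
  have hYP := YY_ge hp2 hup hlt
  have hQM := QQd_pos hp2 huM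
  have hQP := QQd_pos hp2 hup
  have haM_pos : 0 < a uM := by rw [haMval]; nlinarith
  have haP_pos : 0 < a uP := by rw [haPval]; nlinarith
  have hgM : g uM < 0 := by
    rw [hg uM, hhM, mul_zero, add_zero, haMval,
      show p * (p - 1) * uM ^ (p - 2) = QQd p uM from rfl,
      show uP - uM = -(uM - uP) by ring, div_neg]
    have hdd : 2 * ((uM - uP) * XXd p uP uM) ^ 2 / (uM - uP)
        = 2 * (uM - uP) * XXd p uP uM ^ 2 := by
      field_simp
    rw [hdd]
    nlinarith
  have hgP : g uP < 0 := by
    rw [hg uP, hhP, mul_zero, add_zero, haPval,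
      show p * (p - 1) * uP ^ (p - 2) = QQd p uP from rfl,
      show uP - uM = -(uM - uP) by ring, div_neg]
    have hdd : 2 * ((uM - uP) * YYd p uM uP) ^ 2 / (uM - uP)
        = 2 * (uM - uP) * YYd p uM uP ^ 2 := by
      field_simp
    rw [hdd]
    nlinarith
  -- a positive on Icc
  have hapos : ∀ U ∈ Set.Icc uP uM, 0 < a U := by
    intro U hU
    rcases eq_or_lt_of_le hU.1 with hq | h1
    · rw [← hq]; exact haP_pos
    rcases eq_or_lt_of_le hU.2 with hq | h2
    · rw [hq]; exact haM_pos
    exact haposIoo U ⟨h1, h2⟩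
  -- g negative on Icc
  have hgneg : ∀ U ∈ Set.Icc uP uM, g U < 0 := by
    intro U hU
    rcases eq_or_lt_of_le hU.1 with hq | h1
    · rw [← hq]; exact hgP
    rcases eq_or_lt_of_le hU.2 with hq | h2
    · rw [hq]; exact hgM
    exact hgIoo U ⟨h1, h2⟩
  -- continuity of g
  have hposIcc : ∀ U ∈ Set.Icc uP uM, (0:ℝ) < U := fun U hU => lt_of_lt_of_le hup hU.1
  have hrpc : ∀ q : ℝ, ContinuousOn (fun U : ℝ => U ^ q) (Set.Icc uP uM) := by
    intro q U hU
    exact (Real.continuousAt_rpow_const U q (Or.inl (hposIcc U hU).ne')).continuousWithinAt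
  have hhcont : ContinuousOn h (Set.Icc uP uM) := by
    refine ContinuousOn.congr ?_ (fun U _ => hh' U)
    exact ((continuousOn_const.mul ((continuousOn_id.sub continuousOn_const))).add
      (hrpc p)).sub continuousOn_const
  have hgc : ContinuousOn g (Set.Icc uP uM) := by
    refine ContinuousOn.congr ?_ (fun U (_ : U ∈ Set.Icc uP uM) => hg U)
    refine ContinuousOn.add (ContinuousOn.add ?_ ?_) ?_
    · exact (continuousOn_const.mul (hacont.pow 2)).div_const _
    · exact (hacont.mul (continuousOn_const.mul (hrpc (p - 2)))).div_const 2
    · refine ContinuousOn.mul ?_ hhcont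
      exact (ha''cont.div_const 2).sub
        ((ha'cont.pow 2).div hacont (fun U hU => (hapos U hU).ne'))
  -- conclusion via compactness
  obtain ⟨U₀, hU₀, hmax⟩ := isCompact_Icc.exists_isMaxOn (Set.nonempty_Icc.mpr hlt.le) hgc
  refine ⟨-(g U₀), ?_, ?_⟩
  · have := hgneg U₀ hU₀
    linarith
  · intro U hU
    have := (isMaxOn_iff.mp hmax) U hU
    linarith
end

section
/- Let f be smooth, strictly convex with f'''>0 on (u_+,u_-), 0<u_+<u_-, s the Rankine–Hugoniot speed, and a(u_+)=s-f'(u_+). Then g(u_+) := 2a(u_+)[f''(u_+)/4 + a(u_+)/(u_+-u_-)] < 0. -/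
/-- Let `f` be smooth, strictly convex with `f''' > 0` on `(u₊,u₋)`, `0 < u₊ < u₋`, `s` the
Rankine–Hugoniot speed, and `a(u₊) = s - f'(u₊)`.  Then
`g(u₊) := 2a(u₊)[f''(u₊)/4 + a(u₊)/(u₊-u₋)] < 0`.
Here `uP` denotes `u₊` and `uM` denotes `u₋`. -/
theorem stmt_11 (uP uM : ℝ) (hup : 0 < uP) (hlt : uP < uM)
    (f f' f'' f''' : ℝ → ℝ)
    (hd1 : ∀ x : ℝ, HasDerivAt f (f' x) x)
    (hd2 : ∀ x : ℝ, HasDerivAt f' (f'' x) x)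
    (hd3 : ∀ x : ℝ, HasDerivAt f'' (f''' x) x)
    (hconv : StrictConvexOn ℝ (Set.Icc uP uM) f)
    (hf''' : ∀ x ∈ Set.Ioo uP uM, 0 < f''' x)
    (s : ℝ) (hs : s = (f uP - f uM) / (uP - uM))
    (aP : ℝ) (haP : aP = s - f' uP) :
    2 * aP * (f'' uP / 4 + aP / (uP - uM)) < 0 := by
  have hh : (0:ℝ) < uM - uP := by linarith
  have hne : uP - uM ≠ 0 := by linarith
  -- f' is strictly monotone on [uP, uM]
  have hf'mono : StrictMonoOn f' (Set.Icc uP uM) := by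
    have := hconv.strictMonoOn_deriv (fun x _ => (hd1 x).differentiableAt)
    intro x hx y hy hxy
    have h := this hx hy hxy
    rwa [(hd1 x).deriv, (hd1 y).deriv] at h
  -- f'' uP ≥ 0
  have hf''nonneg : 0 ≤ f'' uP := by
    have H : HasDerivWithinAt f' (f'' uP) (Set.Ioi uP) uP := (hd2 uP).hasDerivWithinAt
    rw [hasDerivWithinAt_iff_tendsto_slope' (by simp)] at H
    refine ge_of_tendsto H ?_
    filter_upwards [eventually_nhdsWithin_of_eventually_nhds (eventually_lt_nhds hlt),
      self_mem_nhdsWithin] with t ht ht'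
    have htP : uP < t := ht'
    have h1 : f' uP < f' t :=
      hf'mono (Set.mem_Icc.2 ⟨le_refl _, hlt.le⟩) (Set.mem_Icc.2 ⟨htP.le, ht.le⟩) htP
    rw [slope_def_field]
    have h2 : 0 < t - uP := by linarith
    exact div_nonneg (by linarith) h2.le
  -- f'' is strictly monotone on [uP, uM]
  have hf''mono : StrictMonoOn f'' (Set.Icc uP uM) := by
    apply strictMonoOn_of_deriv_pos (convex_Icc _ _)
      (fun x _ => (hd3 x).continuousAt.continuousWithinAt)
    intro x hx
    rw [interior_Icc] at hx
    rw [(hd3 x).deriv]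
    exact hf''' x hx
  -- auxiliary function ψ = f' - f''(uP) * id , strictly monotone on [uP,uM]
  have hψmono : StrictMonoOn (fun y => f' y - f'' uP * y) (Set.Icc uP uM) := by
    apply strictMonoOn_of_deriv_pos (convex_Icc _ _)
    · exact fun x _ => ((hd2 x).continuousAt.sub
        ((continuous_const.mul continuous_id).continuousAt)).continuousWithinAt
    · intro x hx
      rw [interior_Icc] at hx
      have hdψ : HasDerivAt (fun y => f' y - f'' uP * y) (f'' x - f'' uP) x := by
        exact ((hd2 x).sub ((hasDerivAt_id x).const_mul (f'' uP))).congr_deriv (by ring)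
      rw [hdψ.deriv]
      have := hf''mono (Set.mem_Icc.2 ⟨le_refl _, hlt.le⟩)
        (Set.mem_Icc.2 ⟨hx.1.le, hx.2.le⟩) hx.1
      linarith
  -- auxiliary function φ, strictly monotone on [uP,uM]
  set φ : ℝ → ℝ := fun x => f x - f' uP * x - f'' uP * (x - uP) ^ 2 / 2 with hφ
  have hφd : ∀ x : ℝ, HasDerivAt φ (f' x - f' uP - f'' uP * (x - uP)) x := by
    intro x
    have h1 : HasDerivAt (fun y => f'' uP * (y - uP) ^ 2 / 2)
        (f'' uP * (2 * (x - uP)) / 2) x := by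
      simpa using ((((hasDerivAt_id x).sub_const uP).pow 2).const_mul (f'' uP)).div_const 2
    have h2 := ((hd1 x).sub ((hasDerivAt_id x).const_mul (f' uP))).sub h1
    exact h2.congr_deriv (by ring)
  have hφmono : StrictMonoOn φ (Set.Icc uP uM) := by
    apply strictMonoOn_of_deriv_pos (convex_Icc _ _)
      (fun x _ => (hφd x).continuousAt.continuousWithinAt)
    intro x hx
    rw [interior_Icc] at hx
    rw [(hφd x).deriv]
    have := hψmono (Set.mem_Icc.2 ⟨le_refl _, hlt.le⟩)
      (Set.mem_Icc.2 ⟨hx.1.le, hx.2.le⟩) hx.1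
    simp only [] at this
    linarith
  have hkey : φ uP < φ uM :=
    hφmono (Set.mem_Icc.2 ⟨le_refl _, hlt.le⟩) (Set.mem_Icc.2 ⟨hlt.le, le_refl _⟩) hlt
  simp only [hφ] at hkey
  -- so  f uM - f uP - f' uP * (uM - uP) > f'' uP * (uM - uP)^2 / 2
  have hTaylor : f'' uP * (uM - uP) ^ 2 / 2 < f uM - f uP - f' uP * (uM - uP) := by
    nlinarith [hkey]
  -- identity for aP
  have haP' : aP * (uM - uP) = f uM - f uP - f' uP * (uM - uP) := by
    rw [haP, hs]
    field_simp
    ring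
  have haPpos : 0 < aP := by nlinarith
  have haPlarge : f'' uP * (uM - uP) / 4 < aP := by nlinarith
  -- rewrite the goal to a single fraction with positive denominator
  have hgoal : 2 * aP * (f'' uP / 4 + aP / (uP - uM))
      = (2 * aP * (f'' uP * (uM - uP) / 4 - aP)) / (uM - uP) := by
    field_simp
    ring
  rw [hgoal]
  apply div_neg_of_neg_of_pos _ hh
  nlinarith [haPpos, haPlarge]
end

section
/- Let p∈[2,4] and 0<u_+<u_-, and set l₁(u_-,u_+) := (2-p)u_+(u_--u_+)u_-^{p-2} + u_+²(u_-^{p-2} - u_+^{p-2}). Then l₁=0 if p=2, and l₁(u_-,u_+)<0 for all p∈(2,4] and 0<u_+<u_-. -/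
/-- For `p ∈ [2,4]` and `0 < u₊ < u₋`, the quantity
`l₁(u₋,u₊) = (2-p)u₊(u₋-u₊)u₋^(p-2) + u₊²(u₋^(p-2) - u₊^(p-2))` vanishes when `p = 2`,
and is strictly negative for all `p ∈ (2,4]`.
Here `uP` denotes `u₊` and `uM` denotes `u₋`. -/
theorem stmt_12 (p uP uM : ℝ) (hp : p ∈ Set.Icc (2 : ℝ) 4) (hup : 0 < uP) (hlt : uP < uM)
    (l₁ : ℝ)
    (hl : l₁ = (2 - p) * uP * (uM - uP) * uM ^ (p - 2)
      + uP ^ 2 * (uM ^ (p - 2) - uP ^ (p - 2))) :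
    (p = 2 → l₁ = 0) ∧ (2 < p → l₁ < 0) := by
  have hM : 0 < uM := hup.trans hlt
  constructor
  · intro h
    subst h
    simp [hl]
  · intro hp2
    set q : ℝ := p - 2 with hq
    have hq0 : 0 < q := by simp [hq]; linarith
    have ht0 : 0 < uP / uM := div_pos hup hM
    have ht1 : uP / uM < 1 := (div_lt_one hM).mpr hlt
    have hb := one_add_mul_self_lt_rpow_one_add (s := uP / uM - 1)
      (by linarith) (by intro h; apply absurd (sub_eq_zero.mp h); intro h'; linarith)
      (p := q + 1) (by linarith)
    rw [show (1 : ℝ) + (uP / uM - 1) = uP / uM by ring] at hb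
    have hdiv : (uP / uM) ^ (q + 1) = uP ^ (q + 1) / uM ^ (q + 1) :=
      Real.div_rpow hup.le hM.le (q + 1)
    have hM1 : uM ^ (q + 1) = uM ^ q * uM := by
      rw [Real.rpow_add hM, Real.rpow_one]
    have hP1 : uP ^ (q + 1) = uP ^ q * uP := by
      rw [Real.rpow_add hup, Real.rpow_one]
    have hMq : 0 < uM ^ q := Real.rpow_pos_of_pos hM q
    rw [hdiv, hM1, hP1] at hb
    -- clear the divisions in hb
    have key : uM ^ q * uM + (q + 1) * (uP - uM) * uM ^ q < uP ^ q * uP := by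
      have h1 := mul_lt_mul_of_pos_right hb (mul_pos hMq hM)
      have hMne : uM ≠ 0 := hM.ne'
      field_simp at h1
      have e : uM ^ q * uM / uM = uM ^ q := by field_simp
      nlinarith [h1]
    rw [hl]
    have expand : (2 - p) * uP * (uM - uP) * uM ^ (p - 2)
        + uP ^ 2 * (uM ^ (p - 2) - uP ^ (p - 2))
        = uP * ((uM ^ q * uM + (q + 1) * (uP - uM) * uM ^ q) - uP ^ q * uP) := by
      simp only [hq]; ring
    rw [expand]
    have := mul_lt_mul_of_pos_left key hup
    nlinarith [this]
end

section
/- Let f(u)=u^p with p∈[2,4], 0<u_+<u_-, s the Rankine–Hugoniot speed, a(u_-)=f'(u_-)-s>0. Then g(u_-) := 2a(u_-)[f''(u_-)/4 + a(u_-)/(u_+-u_-)] < 0. -/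
/-- Key estimate: for `0 < q` and `0 < uP < uM`,
`uP * (uM^q - uP^q) < q * uM^q * (uM - uP)`. -/
lemma keyL {q uP uM : ℝ} (hq : 0 < q) (h0 : 0 < uP) (h : uP < uM) :
    uP * (uM ^ q - uP ^ q) < q * uM ^ q * (uM - uP) := by
  have hM : 0 < uM := h0.trans h
  have hX : 0 < uM ^ q := Real.rpow_pos_of_pos hM q
  have hY : 0 < uP ^ q := Real.rpow_pos_of_pos h0 q
  have hYX : uP ^ q ≤ uM ^ q := Real.rpow_le_rpow h0.le h.le hq.le
  rcases lt_or_ge q 1 with h1 | h1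
  · -- Bernoulli : (1+s)^q < 1 + q s with s = (uM - uP)/uP > 0
    set s : ℝ := (uM - uP) / uP with hsdef
    have hspos : 0 < s := div_pos (by linarith) h0
    have hb := rpow_one_add_lt_one_add_mul_self (by linarith : (-1:ℝ) ≤ s)
      hspos.ne' hq h1
    have h1s : (1 : ℝ) + s = uM / uP := by rw [hsdef]; field_simp; ring
    have hdiv : ((uM / uP) : ℝ) ^ q = uM ^ q / uP ^ q := Real.div_rpow hM.le h0.le q
    rw [h1s, hdiv] at hb
    have hb' : uM ^ q < (1 + q * s) * uP ^ q := (div_lt_iff₀ hY).mp hb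
    have hsu : uP * s = uM - uP := by rw [hsdef]; field_simp
    calc uP * (uM ^ q - uP ^ q) < uP * (q * s * uP ^ q) := by
          apply mul_lt_mul_of_pos_left _ h0
          nlinarith [hb']
      _ ≤ uP * (q * s * uM ^ q) := by
          apply mul_le_mul_of_nonneg_left _ h0.le
          apply mul_le_mul_of_nonneg_left hYX (by positivity)
      _ = q * uM ^ q * (uM - uP) := by linear_combination (q * uM ^ q) * hsu
  · -- Bernoulli : 1 + q s ≤ (1+s)^q with s = (uP - uM)/uM ∈ [-1,0)
    set s : ℝ := (uP - uM) / uM with hsdef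
    have hsneg : s < 0 := div_neg_of_neg_of_pos (by linarith) hM
    have hsm1 : (-1 : ℝ) ≤ s := by
      rw [hsdef, le_div_iff₀ hM]; nlinarith
    have hb := one_add_mul_self_le_rpow_one_add hsm1 h1
    have h1s : (1 : ℝ) + s = uP / uM := by rw [hsdef]; field_simp; ring
    have hdiv : ((uP / uM) : ℝ) ^ q = uP ^ q / uM ^ q := Real.div_rpow h0.le hM.le q
    rw [h1s, hdiv] at hb
    have hb' : (1 + q * s) * uM ^ q ≤ uP ^ q := by
      rw [le_div_iff₀ hX] at hb; linarith
    have hsu : uM * s = uP - uM := by rw [hsdef]; field_simp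
    have hq1 : 0 < q * (-s) * uM ^ q := mul_pos (mul_pos hq (neg_pos.2 hsneg)) hX
    calc uP * (uM ^ q - uP ^ q) ≤ uP * (q * (-s) * uM ^ q) := by
          apply mul_le_mul_of_nonneg_left _ h0.le
          nlinarith [hb']
      _ < uM * (q * (-s) * uM ^ q) := mul_lt_mul_of_pos_right h hq1
      _ = q * uM ^ q * (uM - uP) := by linear_combination (-(q * uM ^ q)) * hsu

/-- For `f(u) = u^p` with `p ∈ [2,4]`, `0 < u₊ < u₋`, `s` the Rankine–Hugoniot speed, and
`a(u₋) = f'(u₋) - s > 0`, one has `g(u₋) := 2a(u₋)[f''(u₋)/4 + a(u₋)/(u₊-u₋)] < 0`.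
Here `uP` denotes `u₊` and `uM` denotes `u₋`; `f'(u₋) = p u₋^(p-1)` and
`f''(u₋) = p(p-1)u₋^(p-2)`. -/
theorem stmt_13 (p uP uM : ℝ) (hp : p ∈ Set.Icc (2 : ℝ) 4) (hup : 0 < uP) (hlt : uP < uM)
    (f : ℝ → ℝ) (hf : ∀ u : ℝ, f u = u ^ p)
    (s : ℝ) (hs : s = (f uP - f uM) / (uP - uM))
    (aM : ℝ) (haM : aM = p * uM ^ (p - 1) - s) (haMpos : 0 < aM) :
    2 * aM * (p * (p - 1) * uM ^ (p - 2) / 4 + aM / (uP - uM)) < 0 := by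
  obtain ⟨hp2, hp4⟩ := hp
  have hM : 0 < uM := hup.trans hlt
  have hd : 0 < uM - uP := by linarith
  have hne : uP - uM ≠ 0 := by intro hc; linarith [sub_eq_zero.mp hc]
  set A : ℝ := uM ^ (p - 2) with hAdef
  set B : ℝ := uP ^ (p - 2) with hBdef
  have hA : 0 < A := Real.rpow_pos_of_pos hM _
  have hB : 0 < B := Real.rpow_pos_of_pos hup _
  have hBA : B ≤ A := Real.rpow_le_rpow hup.le hlt.le (by linarith)
  clear_value A B
  have e1 : uM ^ (p - 1) = A * uM := by
    rw [hAdef, show p - 1 = (p - 2) + 1 by ring, Real.rpow_add hM, Real.rpow_one]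
  have e2 : uM ^ p = A * uM * uM := by
    rw [hAdef, show p = (p - 2) + 1 + 1 by ring, Real.rpow_add hM, Real.rpow_add hM,
      Real.rpow_one]; ring
  have e3 : uP ^ p = B * uP * uP := by
    rw [hBdef, show p = (p - 2) + 1 + 1 by ring, Real.rpow_add hup, Real.rpow_add hup,
      Real.rpow_one]; ring
  have haMd : aM * (uM - uP) = p * A * uM * (uM - uP) + B * uP * uP - A * uM * uM := by
    rw [haM, hs, hf, hf, e1, e2, e3]
    field_simp
    ring
  have hdiv2 : aM / (uP - uM) * (uM - uP) ^ 2 = -(aM * (uM - uP)) := by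
    field_simp
    ring
  -- the key algebraic identity, multiplied by (uM - uP)^2
  have hE : (p * (p - 1) * A / 4 + aM / (uP - uM)) * (uM - uP) ^ 2 =
      (p - 1) * (p - 4) / 4 * A * (uM - uP) ^ 2 +
        ((2 - p) * uP * (uM - uP) * A + uP ^ 2 * (A - B)) := by
    linear_combination hdiv2 - haMd
  -- key estimate on the second group of terms
  have hL : uP * (A - B) ≤ (p - 2) * A * (uM - uP) ∧
      (2 < p → uP * (A - B) < (p - 2) * A * (uM - uP)) := by
    constructor
    · rcases eq_or_lt_of_le hp2 with h | h
      · rw [hAdef, hBdef, ← h]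
        norm_num
      · rw [hAdef, hBdef]
        exact (keyL (by linarith) hup hlt).le
    · intro h
      rw [hAdef, hBdef]
      exact keyL (by linarith) hup hlt
  have hEneg : (p * (p - 1) * A / 4 + aM / (uP - uM)) * (uM - uP) ^ 2 < 0 := by
    rw [hE]
    rcases lt_or_ge p 4 with h4 | h4
    · have hstrict : ((p - 1) * (p - 4) / 4) * (A * (uM - uP) ^ 2) < 0 :=
        mul_neg_of_neg_of_pos (by nlinarith) (by positivity)
      have t2 : (2 - p) * uP * (uM - uP) * A + uP ^ 2 * (A - B) ≤ 0 := by
        linarith [mul_le_mul_of_nonneg_left hL.1 hup.le, sq_abs uP, sq_nonneg uP]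
      linarith [hstrict, t2]
    · have hps : 2 < p := by linarith
      have h14' : ((p - 1) * (p - 4) / 4) * (A * (uM - uP) ^ 2) ≤ 0 := by
        have h1 : (p - 1) * (p - 4) / 4 ≤ 0 := by nlinarith
        have h2 : (0:ℝ) ≤ A * (uM - uP) ^ 2 := by positivity
        exact mul_nonpos_of_nonpos_of_nonneg h1 h2
      have t2 : (2 - p) * uP * (uM - uP) * A + uP ^ 2 * (A - B) < 0 := by
        linarith [mul_lt_mul_of_pos_left (hL.2 hps) hup]
      linarith [h14', t2]
  have hbr : p * (p - 1) * A / 4 + aM / (uP - uM) < 0 := by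
    by_contra hc
    push_neg at hc
    nlinarith [mul_nonneg hc (sq_nonneg (uM - uP))]
  exact mul_neg_of_pos_of_neg (by linarith) hbr
end

section
/- Let U:ℝ→(u_+,u_-) be a C¹ strictly decreasing function with U(-∞)=u_- and U(+∞)=u_+, U'∈L¹∩L²(ℝ), and define R(τ)=∫_ℝ |U(ξ-τ)-U(ξ)|² dξ. Then R is even, R'(τ)>0 for τ>0, and for τ>1, R'(τ) ≥ β := 2∫_ℝ∫_x^{x+1} U'(y)U'(x) dy dx > 0; consequently |τ| ≤ R(τ)/β + 1 for all τ∈ℝ. -/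
open MeasureTheory intervalIntegral

lemma conv_prod_integrable {g : ℝ → ℝ} (hg : Integrable g) (hgc : Continuous g) (a b : ℝ) :
    Integrable (Function.uncurry fun ξ s => g (ξ - s))
      ((volume : Measure ℝ).prod (volume.restrict (Set.Ioc a b))) := by
  have hmeas : AEStronglyMeasurable (Function.uncurry fun ξ s => g (ξ - s))
      ((volume : Measure ℝ).prod (volume.restrict (Set.Ioc a b))) :=
    (hgc.comp (continuous_fst.sub continuous_snd)).aestronglyMeasurable
  rw [integrable_prod_iff' hmeas]
  constructor
  · exact Filter.Eventually.of_forall fun s => hg.comp_sub_right s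
  · have : (fun s : ℝ => ∫ ξ : ℝ, ‖g (ξ - s)‖) = fun _ => ∫ ξ : ℝ, ‖g ξ‖ := by
      funext s
      exact integral_sub_right_eq_self (fun ξ => ‖g ξ‖) s
    simp only [Function.uncurry] at *
    rw [this]
    exact (integrableOn_const measure_Ioc_lt_top.ne)

lemma conv_integrable {g : ℝ → ℝ} (hg : Integrable g) (hgc : Continuous g) (a b : ℝ) :
    Integrable (fun ξ => ∫ s in Set.Ioc a b, ‖g (ξ - s)‖) := by
  have := (conv_prod_integrable hg.norm hgc.norm a b).integral_prod_left
  simpa using this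

lemma mul_nonneg_of_nonpos_nonpos' {a b : ℝ} (ha : a ≤ 0) (hb : b ≤ 0) : 0 ≤ a * b := by
  nlinarith

/-- Let `U : ℝ → (u₊,u₋)` be a C¹ strictly decreasing profile with `U(-∞)=u₋`, `U(+∞)=u₊`
and `U' ∈ L¹ ∩ L²(ℝ)`, and set `R(τ) = ∫ℝ |U(ξ-τ)-U(ξ)|² dξ`.  Then `R` is even,
`R'(τ) > 0` for `τ > 0`, `β := 2∫ℝ∫ₓ^(x+1) U'(y)U'(x) dy dx > 0`, `R'(τ) ≥ β` for `τ > 1`,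
and consequently `|τ| ≤ R(τ)/β + 1` for all `τ ∈ ℝ`.
Here `uP` denotes `u₊` and `uM` denotes `u₋`. -/
theorem stmt_14 (uP uM : ℝ) (hlt : uP < uM)
    (U U' : ℝ → ℝ)
    (hmem : ∀ ξ : ℝ, U ξ ∈ Set.Ioo uP uM)
    (hanti : StrictAnti U)
    (hdU : ∀ ξ : ℝ, HasDerivAt U (U' ξ) ξ)
    (hU'cont : Continuous U')
    (hlimM : Filter.Tendsto U Filter.atBot (nhds uM))
    (hlimP : Filter.Tendsto U Filter.atTop (nhds uP))
    (hL1 : Integrable U')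
    (hL2 : Integrable (fun x => (U' x) ^ 2))
    (R : ℝ → ℝ)
    (hR : ∀ τ : ℝ, R τ = ∫ ξ : ℝ, (U (ξ - τ) - U ξ) ^ 2)
    (β : ℝ)
    (hβ : β = 2 * ∫ x : ℝ, (∫ y in x..(x + 1), U' y) * U' x) :
    (∀ τ : ℝ, R (-τ) = R τ)
    ∧ (∀ τ : ℝ, 0 < τ → 0 < deriv R τ)
    ∧ 0 < β
    ∧ (∀ τ : ℝ, 1 < τ → β ≤ deriv R τ)
    ∧ (∀ τ : ℝ, |τ| ≤ R τ / β + 1) := by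
  have hUc : Continuous U := by
    rw [continuous_iff_continuousAt]; exact fun x => (hdU x).continuousAt
  -- basic bound
  have hbd : ∀ a b : ℝ, |U a - U b| ≤ uM - uP := by
    intro a b
    have h1 := hmem a; have h2 := hmem b
    rw [abs_le]; constructor <;> [linarith [h1.1, h2.2]; linarith [h1.2, h2.1]]
  -- U' is nonpositive
  have hU'neg : ∀ x, U' x ≤ 0 := by
    intro x
    have hslope : Filter.Tendsto (slope U x) (nhdsWithin x {x}ᶜ) (nhds (U' x)) :=
      hasDerivAt_iff_tendsto_slope.mp (hdU x)
    have hmono : nhdsWithin x (Set.Ioi x) ≤ nhdsWithin x {x}ᶜ :=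
      nhdsWithin_mono x (fun y hy => (ne_of_gt hy : y ≠ x))
    refine le_of_tendsto (hslope.mono_left hmono) ?_
    filter_upwards [self_mem_nhdsWithin] with y hy
    have hxy : x < y := hy
    have : U y < U x := hanti hxy
    rw [slope_def_field]
    exact div_nonpos_of_nonpos_of_nonneg (by linarith) (by linarith)
  -- derivative of s ↦ U (ξ - s)
  have hDs : ∀ ξ s : ℝ, HasDerivAt (fun s => U (ξ - s)) (-U' (ξ - s)) s := by
    intro ξ s
    have h1 : HasDerivAt (fun s : ℝ => ξ - s) (-1) s := (hasDerivAt_id s).const_sub ξ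
    simpa [Function.comp_def] using (hdU (ξ - s)).comp s h1
  -- FTC for increments of U
  have hFTC : ∀ ξ τ : ℝ, U (ξ - τ) - U ξ = ∫ s in (0:ℝ)..τ, -U' (ξ - s) := by
    intro ξ τ
    have hint : IntervalIntegrable (fun s => -U' (ξ - s)) volume 0 τ :=
      ((hU'cont.comp (continuous_const.sub continuous_id)).neg).intervalIntegrable 0 τ
    have := intervalIntegral.integral_eq_sub_of_hasDerivAt
      (fun s _ => hDs ξ s) hint
    simpa using this.symm
  set G : ℝ → ℝ := fun s => 2 * ∫ x : ℝ, U' x * (U (x + s) - U x) with hG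
  -- integrability of the G-integrand
  have hInt1 : ∀ s : ℝ, Integrable (fun x => U' x * (U (x + s) - U x)) := by
    intro s
    refine Integrable.mono' (hL1.norm.const_mul (uM - uP)) ?_ ?_
    · exact (hU'cont.mul ((hUc.comp (continuous_id.add continuous_const)).sub
        hUc)).aestronglyMeasurable
    · filter_upwards with x
      rw [norm_mul]
      calc ‖U' x‖ * ‖U (x + s) - U x‖ ≤ ‖U' x‖ * (uM - uP) := by
            exact mul_le_mul_of_nonneg_left (by simpa [Real.norm_eq_abs] using hbd (x+s) x)
              (norm_nonneg _)
        _ = (uM - uP) * ‖U' x‖ := mul_comm _ _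
  -- continuity of G
  have hGcont : Continuous G := by
    rw [hG]
    refine continuous_const.mul ?_
    refine MeasureTheory.continuous_of_dominated ?_ ?_ (hL1.norm.const_mul (uM - uP)) ?_
    · exact fun s => (hInt1 s).aestronglyMeasurable
    · intro s
      filter_upwards with x
      rw [norm_mul]
      calc ‖U' x‖ * ‖U (x + s) - U x‖ ≤ ‖U' x‖ * (uM - uP) :=
            mul_le_mul_of_nonneg_left (by simpa [Real.norm_eq_abs] using hbd (x+s) x)
              (norm_nonneg _)
        _ = (uM - uP) * ‖U' x‖ := mul_comm _ _
    · filter_upwards with x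
      exact continuous_const.mul ((hUc.comp (continuous_const.add continuous_id)).sub
        continuous_const)
  -- G is monotone
  have hGmono : Monotone G := by
    intro s t hst
    have hdiff : G t - G s = 2 * ∫ x : ℝ, U' x * (U (x + t) - U (x + s)) := by
      rw [hG]
      rw [← mul_sub, ← integral_sub (hInt1 t) (hInt1 s)]
      congr 1
      apply MeasureTheory.integral_congr_ae
      filter_upwards with x
      ring
    have hnn : 0 ≤ ∫ x : ℝ, U' x * (U (x + t) - U (x + s)) := by
      apply MeasureTheory.integral_nonneg
      intro x
      have h1 : U (x + t) ≤ U (x + s) := hanti.antitone (by linarith)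
      exact mul_nonneg_of_nonpos_nonpos' (hU'neg x) (by linarith)
    linarith
  have hG0 : G 0 = 0 := by simp [hG]
  -- existence of a point with strictly negative derivative
  have hx0 : ∃ x₀ : ℝ, U' x₀ < 0 := by
    by_contra h
    push_neg at h
    have hz : ∀ x, U' x = 0 := fun x => le_antisymm (hU'neg x) (h x)
    have hconst : U 0 = U 1 :=
      is_const_of_deriv_eq_zero (fun x => (hdU x).differentiableAt)
        (fun x => by rw [(hdU x).deriv]; exact hz x) 0 1
    exact absurd hconst (ne_of_gt (hanti zero_lt_one))
  -- G is strictly positive on (0, ∞)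
  have hGpos : ∀ s : ℝ, 0 < s → 0 < G s := by
    intro s hs
    obtain ⟨x₀, hx₀⟩ := hx0
    set f : ℝ → ℝ := fun x => U' x * (U (x + s) - U x) with hf
    have hfc : Continuous f := hU'cont.mul ((hUc.comp (continuous_id.add
      continuous_const)).sub hUc)
    have hfnn : ∀ x, 0 ≤ f x := fun x =>
      mul_nonneg_of_nonpos_nonpos' (hU'neg x)
        (by linarith [hanti (show x < x + s by linarith)])
    have hfpos : 0 < f x₀ :=
      mul_pos_of_neg_of_neg hx₀ (by linarith [hanti (show x₀ < x₀ + s by linarith)])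
    have hsupp : 0 < volume (Function.support f) := by
      refine (hfc.isOpen_support).measure_pos volume ⟨x₀, ?_⟩
      exact ne_of_gt hfpos
    have h2 := (integral_pos_iff_support_of_nonneg hfnn (hInt1 s)).2 hsupp
    rw [hG]
    simp only []
    have : (∫ x : ℝ, U' x * (U (x + s) - U x)) = ∫ x : ℝ, f x ∂volume := rfl
    rw [this]
    linarith
  -- β = G 1
  have hβG : β = G 1 := by
    rw [hβ, hG]
    congr 1
    apply MeasureTheory.integral_congr_ae
    filter_upwards with x
    have : (∫ y in x..(x + 1), U' y) = U (x + 1) - U x := by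
      apply intervalIntegral.integral_eq_sub_of_hasDerivAt (fun y _ => hdU y)
      exact hU'cont.intervalIntegrable x (x + 1)
    rw [this]; ring
  -- integrability of the R-integrand
  have hFint : ∀ τ : ℝ, Integrable (fun ξ => (U (ξ - τ) - U ξ) ^ 2) := by
    intro τ
    refine Integrable.mono' ((conv_integrable hL1 hU'cont (min 0 τ) (max 0 τ)).const_mul
      (uM - uP)) ?_ ?_
    · exact (((hUc.comp (continuous_id.sub continuous_const)).sub hUc).pow 2).aestronglyMeasurable
    · filter_upwards with ξ
      have h1 : |U (ξ - τ) - U ξ| ≤ ∫ s in Set.Ioc (min 0 τ) (max 0 τ), ‖U' (ξ - s)‖ := by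
        rw [hFTC ξ τ]
        have := intervalIntegral.norm_integral_le_integral_norm_uIoc
          (f := fun s => -U' (ξ - s)) (a := 0) (b := τ) (μ := volume)
        simpa [Set.uIoc, Real.norm_eq_abs, abs_neg] using this
      have h2 : |U (ξ - τ) - U ξ| ≤ uM - uP := hbd _ _
      have h3 : ‖(U (ξ - τ) - U ξ) ^ 2‖ = |U (ξ - τ) - U ξ| * |U (ξ - τ) - U ξ| := by
        rw [Real.norm_eq_abs, abs_pow]; ring
      rw [h3]
      calc |U (ξ - τ) - U ξ| * |U (ξ - τ) - U ξ|
          ≤ (uM - uP) * (∫ s in Set.Ioc (min 0 τ) (max 0 τ), ‖U' (ξ - s)‖) :=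
            mul_le_mul h2 h1 (abs_nonneg _) (by linarith)
        _ = _ := rfl
  -- the key representation R τ = ∫₀^τ G for τ ≥ 0
  have hswap : ∀ τ : ℝ, 0 ≤ τ → R τ = ∫ s in (0:ℝ)..τ, G s := by
    intro τ hτ
    -- pointwise FTC in the parameter
    have hpt : ∀ ξ : ℝ, (U (ξ - τ) - U ξ) ^ 2
        = ∫ s in Set.Ioc (0:ℝ) τ, (-2) * U' (ξ - s) * (U (ξ - s) - U ξ) := by
      intro ξ
      have hD : ∀ s ∈ Set.uIcc (0:ℝ) τ, HasDerivAt (fun s => (U (ξ - s) - U ξ) ^ 2)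
          ((-2) * U' (ξ - s) * (U (ξ - s) - U ξ)) s := by
        intro s _
        have h := ((hDs ξ s).sub_const (U ξ)).pow 2
        exact h.congr_deriv (by rw [show (2:ℕ) - 1 = 1 from rfl]; push_cast; ring)
      have hci : Continuous fun s => (-2) * U' (ξ - s) * (U (ξ - s) - U ξ) :=
        ((continuous_const.mul (hU'cont.comp (continuous_const.sub continuous_id))).mul
          ((hUc.comp (continuous_const.sub continuous_id)).sub continuous_const))
      have := intervalIntegral.integral_eq_sub_of_hasDerivAt hD (hci.intervalIntegrable 0 τ)
      rw [intervalIntegral.integral_of_le hτ] at this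
      simpa using this.symm
    -- product integrability
    have hprod : Integrable
        (Function.uncurry fun ξ s => (-2) * U' (ξ - s) * (U (ξ - s) - U ξ))
        ((volume : Measure ℝ).prod (volume.restrict (Set.Ioc 0 τ))) := by
      have hbprod := conv_prod_integrable (g := fun x => 2 * (uM - uP) * ‖U' x‖)
        ((hL1.norm.const_mul _)) (continuous_const.mul hU'cont.norm) 0 τ
      refine hbprod.mono' ?_ ?_
      · exact ((continuous_const.mul (hU'cont.comp (continuous_fst.sub continuous_snd))).mul
          ((hUc.comp (continuous_fst.sub continuous_snd)).sub
            (hUc.comp continuous_fst))).aestronglyMeasurable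
      · filter_upwards with p
        rcases p with ⟨ξ, s⟩
        simp only [Function.uncurry]
        rw [norm_mul, norm_mul]
        have hb : ‖U (ξ - s) - U ξ‖ ≤ uM - uP := by
          simpa [Real.norm_eq_abs] using hbd (ξ - s) ξ
        have : ‖(-2 : ℝ)‖ = 2 := by norm_num
        rw [this]
        calc 2 * ‖U' (ξ - s)‖ * ‖U (ξ - s) - U ξ‖
            ≤ 2 * ‖U' (ξ - s)‖ * (uM - uP) := by
              exact mul_le_mul_of_nonneg_left hb (by positivity)
          _ = 2 * (uM - uP) * ‖U' (ξ - s)‖ := by ring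
    -- inner integral in ξ equals G s
    have hinner : ∀ s : ℝ, (∫ ξ : ℝ, (-2) * U' (ξ - s) * (U (ξ - s) - U ξ)) = G s := by
      intro s
      have hfun : (fun ξ : ℝ => (-2) * U' (ξ - s) * (U (ξ - s) - U ξ))
          = fun ξ : ℝ => (fun x => (-2) * U' x * (U x - U (x + s))) (ξ - s) := by
        funext ξ
        simp [sub_add_cancel]
      rw [hfun, MeasureTheory.integral_sub_right_eq_self
        (fun x => (-2) * U' x * (U x - U (x + s))) s]
      rw [hG]
      simp only []
      rw [← MeasureTheory.integral_const_mul]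
      apply MeasureTheory.integral_congr_ae
      filter_upwards with x
      ring
    calc R τ = ∫ ξ : ℝ, ∫ s in Set.Ioc (0:ℝ) τ, (-2) * U' (ξ - s) * (U (ξ - s) - U ξ) := by
          rw [hR]
          exact MeasureTheory.integral_congr_ae (Filter.Eventually.of_forall hpt)
      _ = ∫ s in Set.Ioc (0:ℝ) τ, ∫ ξ : ℝ, (-2) * U' (ξ - s) * (U (ξ - s) - U ξ) :=
          MeasureTheory.integral_integral_swap hprod
      _ = ∫ s in Set.Ioc (0:ℝ) τ, G s :=
          MeasureTheory.integral_congr_ae (Filter.Eventually.of_forall fun s => hinner s)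
      _ = ∫ s in (0:ℝ)..τ, G s := (intervalIntegral.integral_of_le hτ).symm
  -- evenness
  have hReven : ∀ τ : ℝ, R (-τ) = R τ := by
    intro τ
    rw [hR, hR]
    have h1 : (fun ξ : ℝ => (U (ξ - -τ) - U ξ) ^ 2)
        = fun ξ : ℝ => (fun ζ : ℝ => (U (ζ - τ) - U ζ) ^ 2) (ξ + τ) := by
      funext ξ
      simp only [sub_neg_eq_add, add_sub_cancel_right]
      ring
    rw [h1]
    exact MeasureTheory.integral_add_right_eq_self (fun ζ : ℝ => (U (ζ - τ) - U ζ) ^ 2) τ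
  -- derivative formula
  have hderiv : ∀ τ : ℝ, 0 < τ → deriv R τ = G τ := by
    intro τ hτ
    have hev : R =ᶠ[nhds τ] fun u => ∫ s in (0:ℝ)..u, G s := by
      filter_upwards [Ioi_mem_nhds hτ] with u hu
      exact hswap u (le_of_lt hu)
    rw [hev.deriv_eq, Continuous.deriv_integral G hGcont 0 τ]
  have hβpos : 0 < β := by rw [hβG]; exact hGpos 1 one_pos
  have hRnn : ∀ τ : ℝ, 0 ≤ R τ := by
    intro τ
    rw [hR]
    exact MeasureTheory.integral_nonneg fun ξ => sq_nonneg _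
  refine ⟨hReven, ?_, hβpos, ?_, ?_⟩
  · intro τ hτ
    rw [hderiv τ hτ]
    exact hGpos τ hτ
  · intro τ hτ
    rw [hderiv τ (lt_trans one_pos hτ), hβG]
    exact hGmono hτ.le
  · intro τ
    have habs : R |τ| = R τ := by
      rcases abs_cases τ with ⟨h, _⟩ | ⟨h, _⟩
      · rw [h]
      · rw [h, hReven]
    by_cases ht : |τ| ≤ 1
    · have : 0 ≤ R τ / β := div_nonneg (hRnn τ) hβpos.le
      linarith
    · push_neg at ht
      have ht1 : (1:ℝ) ≤ |τ| := ht.le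
      have h1 : R |τ| = ∫ s in (0:ℝ)..|τ|, G s := hswap _ (abs_nonneg τ)
      have hsplit : (∫ s in (0:ℝ)..|τ|, G s)
          = (∫ s in (0:ℝ)..1, G s) + ∫ s in (1:ℝ)..|τ|, G s :=
        (intervalIntegral.integral_add_adjacent_intervals
          (hGcont.intervalIntegrable 0 1) (hGcont.intervalIntegrable 1 |τ|)).symm
      have h2 : 0 ≤ ∫ s in (0:ℝ)..1, G s := by
        apply intervalIntegral.integral_nonneg (by norm_num)
        intro x hx
        rw [← hG0]
        exact hGmono hx.1
      have h3 : β * (|τ| - 1) ≤ ∫ s in (1:ℝ)..|τ|, G s := by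
        have hm : (∫ s in (1:ℝ)..|τ|, β) ≤ ∫ s in (1:ℝ)..|τ|, G s := by
          apply intervalIntegral.integral_mono_on ht1 intervalIntegrable_const
            (hGcont.intervalIntegrable 1 |τ|)
          intro x hx
          rw [hβG]
          exact hGmono hx.1
        rw [intervalIntegral.integral_const] at hm
        calc β * (|τ| - 1) = (|τ| - 1) • β := by rw [smul_eq_mul]; ring
          _ ≤ _ := hm
      have hfinal : β * (|τ| - 1) ≤ R τ := by
        rw [← habs, h1, hsplit]
        linarith
      have : |τ| - 1 ≤ R τ / β := by
        rw [le_div_iff₀ hβpos]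
        calc (|τ| - 1) * β = β * (|τ| - 1) := mul_comm _ _
          _ ≤ R τ := hfinal
      linarith
end

section
/- Let y:ℝ→(0,1) be given by y(ξ)=(U(ξ)-u_-)/(u_+-u_-) where U solves U'=h(U), h<0 on (u_+,u_-), with a(U)=(u_--u_+)h(U)/((U-u_+)(U-u_-)). Then for any C¹ function φ with ψ(y):=φ(ξ(y))a(U(ξ(y))), one has ∫_0^1 y(1-y)|ψ'(y)|² dy = ∫_ℝ a(U(ξ)) φ'(ξ)² dξ - ∫_ℝ (a_ξξ - a_ξ²/a)(ξ) φ(ξ)² dξ, where a(ξ):=a(U(ξ)). -/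
open MeasureTheory

open Set Filter

/-- A function integrable on `(M,∞)` cannot tend to a positive limit at `+∞`. -/
lemma aux_not_int (g : ℝ → ℝ) (M l : ℝ) (hl : 0 < l)
    (hg : IntegrableOn g (Set.Ioi M)) (ht : Tendsto g atTop (nhds l)) : False := by
  obtain ⟨N, hN⟩ := Metric.tendsto_atTop.mp ht (l / 2) (by positivity)
  set N' := max N M with hN'
  have hsub : Set.Ioi N' ⊆ Set.Ioi M := Ioi_subset_Ioi (le_max_right _ _)
  have hgi : IntegrableOn g (Ioi N') := hg.mono_set hsub
  have hc : Integrable (fun _ : ℝ => l / 2) (volume.restrict (Ioi N')) := by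
    apply hgi.mono' aestronglyMeasurable_const
    filter_upwards [ae_restrict_mem measurableSet_Ioi] with x hx
    have hxN : N ≤ x := le_of_lt (lt_of_le_of_lt (le_max_left _ _) hx)
    have := hN x hxN
    rw [Real.dist_eq, abs_sub_lt_iff] at this
    rw [Real.norm_eq_abs, abs_of_pos (by positivity)]
    linarith [this.2]
  rw [integrable_const_iff] at hc
  rcases hc with hc | hc
  · exact absurd hc (by positivity)
  · simp [isFiniteMeasure_restrict, Real.volume_Ioi] at hc

/-- Key limiting lemma. -/
lemma aux_limit_zero (A A' f f' : ℝ → ℝ)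
    (hA : ∀ x, 0 < A x)
    (hAd : ∀ x, HasDerivAt A (A' x) x)
    (hfd : ∀ x, HasDerivAt f (f' x) x)
    (h1 : Integrable (fun x => A x * f' x ^ 2))
    (h2 : Integrable (fun x => f x ^ 2 * A' x ^ 2 / A x))
    (L : ℝ) (hL : Tendsto (fun x => f x ^ 2 * A' x) atTop (nhds L)) : L = 0 := by
  by_contra hL0
  set G : ℝ → ℝ := fun x => f x ^ 2 * A' x with hG
  set K : ℝ → ℝ := fun x => f x ^ 2 * A' x ^ 2 / A x with hK
  have hLpos : 0 < |L| := abs_pos.mpr hL0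
  obtain ⟨M, hM⟩ := Metric.tendsto_atTop.mp hL (|L| / 2) (by positivity)
  have hGlow : ∀ x ∈ Ioi M, |L| / 2 ≤ |G x| := by
    intro x hx
    have h0 := hM x (le_of_lt hx)
    rw [Real.dist_eq] at h0
    have h2' := abs_sub_abs_le_abs_sub L (G x)
    rw [abs_sub_comm] at h2'
    linarith
  have hGhigh : ∀ x ∈ Ioi M, |G x| ≤ 3 * |L| / 2 := by
    intro x hx
    have h0 := hM x (le_of_lt hx)
    rw [Real.dist_eq] at h0
    have h1' := abs_sub_abs_le_abs_sub (G x) L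
    linarith
  have hf2pos : ∀ x ∈ Ioi M, 0 < f x ^ 2 := by
    intro x hx
    rcases lt_or_eq_of_le (sq_nonneg (f x)) with hlt | heq
    · exact hlt
    · exfalso
      have h0 := hGlow x hx
      have : |G x| = 0 := by
        simp only [hG, ← heq, zero_mul, abs_zero]
      rw [this] at h0
      linarith
  set q : ℝ → ℝ := fun x => f x ^ 2 * A x with hq
  have hqpos : ∀ x ∈ Ioi M, 0 < q x := fun x hx => mul_pos (hf2pos x hx) (hA x)
  -- continuity / measurability facts
  have hfc : Continuous f := by
    rw [continuous_iff_continuousAt]; exact fun x => (hfd x).continuousAt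
  have hAc : Continuous A := by
    rw [continuous_iff_continuousAt]; exact fun x => (hAd x).continuousAt
  have hf'm : Measurable f' := by
    have : f' = deriv f := funext fun x => ((hfd x).deriv).symm
    rw [this]; exact measurable_deriv f
  have hA'm : Measurable A' := by
    have : A' = deriv A := funext fun x => ((hAd x).deriv).symm
    rw [this]; exact measurable_deriv A
  have hqc : Continuous q := (hfc.pow 2).mul hAc
  -- Step a : 1/q integrable on Ioi M
  have hKnonneg : ∀ x, 0 ≤ K x := fun x => div_nonneg (by positivity) (hA x).le
  have hKq : ∀ x, K x * q x = G x ^ 2 := by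
    intro x
    show f x ^ 2 * A' x ^ 2 / A x * (f x ^ 2 * A x) = (f x ^ 2 * A' x) ^ 2
    have hAx := (hA x).ne'
    field_simp
  have hG2 : ∀ x ∈ Ioi M, L ^ 2 / 4 ≤ G x ^ 2 := by
    intro x hx
    have h0 := hGlow x hx
    have := sq_abs (G x)
    nlinarith [sq_abs (G x), sq_abs L]
  have hinvq : IntegrableOn (fun x => 1 / q x) (Ioi M) := by
    apply Integrable.mono' ((h2.const_mul (4 / L ^ 2)).integrableOn (s := Ioi M))
    · exact (ContinuousOn.div continuousOn_const hqc.continuousOn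
        (fun x hx => (hqpos x hx).ne')).aestronglyMeasurable measurableSet_Ioi
    · filter_upwards [ae_restrict_mem measurableSet_Ioi] with x hx
      have hqx := hqpos x hx
      rw [Real.norm_eq_abs, abs_of_pos (by positivity)]
      rw [div_le_iff₀ hqx]
      have hL2 : 0 < L ^ 2 := by positivity
      rw [div_mul_eq_mul_div, div_mul_eq_mul_div, le_div_iff₀ hL2]
      nlinarith [hKq x, hG2 x hx]
  -- Step b : q'/q integrable on Ioi M
  set q' : ℝ → ℝ := fun x => 2 * f x * f' x * A x + f x ^ 2 * A' x with hq'
  have hqd : ∀ x, HasDerivAt q (q' x) x := by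
    intro x
    have := ((hfd x).pow 2).mul (hAd x)
    exact this.congr_deriv (by simp only [hq', Pi.pow_apply]; norm_num)
  have hq'm : Measurable q' :=
    ((((measurable_const.mul hfc.measurable).mul hf'm).mul hAc.measurable).add
      ((hfc.measurable.pow_const 2).mul hA'm))
  have hbound : IntegrableOn (fun x => A x * f' x ^ 2 + (1 + 3 * |L| / 2) * (1 / q x)) (Ioi M) :=
    (h1.integrableOn).add (hinvq.const_mul _)
  have hq'q : IntegrableOn (fun x => q' x / q x) (Ioi M) := by
    apply Integrable.mono' hbound
    · exact ((hq'm.div hqc.measurable)).aestronglyMeasurable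
    · filter_upwards [ae_restrict_mem measurableSet_Ioi] with x hx
      have hqx := hqpos x hx
      have hGx := hGhigh x hx
      rw [Real.norm_eq_abs, abs_div, abs_of_pos hqx, div_le_iff₀ hqx]
      have habs : |q' x| ≤ f x ^ 2 * f' x ^ 2 * A x ^ 2 + 1 + |G x| := by
        have h1' := abs_add_le (2 * f x * f' x * A x) (f x ^ 2 * A' x)
        have h2' : |2 * f x * f' x * A x| ≤ f x ^ 2 * f' x ^ 2 * A x ^ 2 + 1 := by
          nlinarith [sq_nonneg (|2 * f x * f' x * A x| - 2), sq_abs (2 * f x * f' x * A x),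
            abs_nonneg (2 * f x * f' x * A x)]
        calc |q' x| ≤ |2 * f x * f' x * A x| + |f x ^ 2 * A' x| := h1'
          _ ≤ f x ^ 2 * f' x ^ 2 * A x ^ 2 + 1 + |G x| := by rw [hG]; linarith
      -- (A f'² + c/q) * q = A f'² q + c ; and f²f'²A² = A f'² * q
      have hkey : f x ^ 2 * f' x ^ 2 * A x ^ 2 = A x * f' x ^ 2 * q x := by
        rw [hq]; ring
      calc |q' x| ≤ f x ^ 2 * f' x ^ 2 * A x ^ 2 + 1 + |G x| := habs
        _ ≤ A x * f' x ^ 2 * q x + (1 + 3 * |L| / 2) := by rw [hkey]; linarith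
        _ = (A x * f' x ^ 2 + (1 + 3 * |L| / 2) * (1 / q x)) * q x := by
            field_simp
  -- Step c : log q tends to a limit
  have hrd : ∀ x ∈ Ioi M, HasDerivAt (fun x => Real.log (q x)) (q' x / q x) x := by
    intro x hx
    exact (hqd x).log (hqpos x hx).ne'
  have hr := tendsto_limUnder_of_hasDerivAt_of_integrableOn_Ioi hrd hq'q
  set c := limUnder atTop (fun x => Real.log (q x)) with hc
  have hqlim : Tendsto (fun x => 1 / q x) atTop (nhds (Real.exp (-c))) := by
    have h0 : Tendsto (fun x => Real.exp (-(Real.log (q x)))) atTop (nhds (Real.exp (-c))) :=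
      (Real.continuous_exp.tendsto _).comp hr.neg
    apply h0.congr'
    filter_upwards [Ioi_mem_atTop M] with x hx
    rw [Real.exp_neg, Real.exp_log (hqpos x hx), one_div]
  exact aux_not_int _ M _ (Real.exp_pos _) hinvq hqlim

lemma aux_limit_zero_bot (A A' f f' : ℝ → ℝ)
    (hA : ∀ x, 0 < A x)
    (hAd : ∀ x, HasDerivAt A (A' x) x)
    (hfd : ∀ x, HasDerivAt f (f' x) x)
    (h1 : Integrable (fun x => A x * f' x ^ 2))
    (h2 : Integrable (fun x => f x ^ 2 * A' x ^ 2 / A x))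
    (L : ℝ) (hL : Tendsto (fun x => f x ^ 2 * A' x) atBot (nhds L)) : L = 0 := by
  have key : (-L) = 0 := by
    apply aux_limit_zero (fun x => A (-x)) (fun x => -A' (-x)) (fun x => f (-x))
      (fun x => -f' (-x))
    · exact fun x => hA (-x)
    · intro x
      have := (hAd (-x)).comp x (hasDerivAt_neg x)
      exact this.congr_deriv (by ring)
    · intro x
      have := (hfd (-x)).comp x (hasDerivAt_neg x)
      exact this.congr_deriv (by ring)
    · apply h1.comp_neg.congr
      exact ae_of_all _ fun x => by simp
    · apply h2.comp_neg.congr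
      exact ae_of_all _ fun x => by simp
    · have h0 : Tendsto (fun x => f (-x) ^ 2 * A' (-x)) atTop (nhds L) :=
        hL.comp tendsto_neg_atTop_atBot
      have := h0.neg
      apply this.congr
      intro x; ring
  linarith

/-- Change-of-variables identity for the weighted Poincaré inequality: with
`y(ξ) = (U(ξ)-u₋)/(u₊-u₋)` where `U' = h(U) < 0`, the weight
`a(U) = (u₋-u₊)h(U)/((U-u₊)(U-u₋))`, and `ψ(y(ξ)) = φ(ξ)·a(U(ξ))` for a C¹ function `φ`,
one has `∫₀¹ y(1-y)|ψ'(y)|² dy = ∫ℝ a(U(ξ)) φ'(ξ)² dξ - ∫ℝ (a_ξξ - a_ξ²/a)(ξ) φ(ξ)² dξ`,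
where `a(ξ) := a(U(ξ))` and `a_ξ, a_ξξ` are its `ξ`-derivatives.
Here `uP` denotes `u₊` and `uM` denotes `u₋`. -/
theorem stmt_16 (uP uM : ℝ) (hlt : uP < uM)
    (h : ℝ → ℝ) (hneg : ∀ u ∈ Set.Ioo uP uM, h u < 0)
    (U : ℝ → ℝ) (hmem : ∀ ξ : ℝ, U ξ ∈ Set.Ioo uP uM)
    (hode : ∀ ξ : ℝ, HasDerivAt U (h (U ξ)) ξ)
    (hlimM : Filter.Tendsto U Filter.atBot (nhds uM))
    (hlimP : Filter.Tendsto U Filter.atTop (nhds uP))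
    (a : ℝ → ℝ)
    (ha : ∀ u ∈ Set.Ioo uP uM, a u = (uM - uP) * h u / ((u - uP) * (u - uM)))
    (y : ℝ → ℝ) (hy : ∀ ξ : ℝ, y ξ = (U ξ - uM) / (uP - uM))
    (φ φ' : ℝ → ℝ) (hφ : ∀ ξ : ℝ, HasDerivAt φ (φ' ξ) ξ)
    (ψ ψ' : ℝ → ℝ)
    (hψ : ∀ ξ : ℝ, ψ (y ξ) = φ ξ * a (U ξ))
    (hψ' : ∀ t ∈ Set.Ioo (0 : ℝ) 1, HasDerivAt ψ (ψ' t) t)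
    (aξ aξξ : ℝ → ℝ)
    (haξ : ∀ ξ : ℝ, HasDerivAt (fun ζ => a (U ζ)) (aξ ξ) ξ)
    (haξξ : ∀ ξ : ℝ, HasDerivAt aξ (aξξ ξ) ξ)
    (hint1 : IntegrableOn (fun t => t * (1 - t) * (ψ' t) ^ 2) (Set.Ioo (0 : ℝ) 1))
    (hint2 : Integrable (fun ξ => a (U ξ) * (φ' ξ) ^ 2))
    (hint3 : Integrable (fun ξ => (aξξ ξ - (aξ ξ) ^ 2 / a (U ξ)) * (φ ξ) ^ 2)) :
    ∫ t in Set.Ioo (0 : ℝ) 1, t * (1 - t) * (ψ' t) ^ 2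
      = (∫ ξ : ℝ, a (U ξ) * (φ' ξ) ^ 2)
        - ∫ ξ : ℝ, (aξξ ξ - (aξ ξ) ^ 2 / a (U ξ)) * (φ ξ) ^ 2 := by
  have huMP : uP - uM < 0 := by linarith
  -- positivity of the weight along the trajectory
  have hApos : ∀ ξ, 0 < a (U ξ) := by
    intro ξ
    obtain ⟨hm1, hm2⟩ := hmem ξ
    rw [ha _ (hmem ξ)]
    have hh := hneg _ (hmem ξ)
    apply div_pos_of_neg_of_neg
    · have : 0 < uM - uP := by linarith
      nlinarith
    · nlinarith
  -- derivative of y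
  set D : ℝ → ℝ := fun ξ => h (U ξ) / (uP - uM) with hD
  have hy'pos : ∀ ξ, 0 < D ξ := fun ξ => div_pos_of_neg_of_neg (hneg _ (hmem ξ)) huMP
  have hyfun : y = fun ξ => (U ξ - uM) / (uP - uM) := funext hy
  have hyd : ∀ ξ, HasDerivAt y (D ξ) ξ := by
    intro ξ
    rw [hyfun]
    exact ((hode ξ).sub_const uM).div_const _
  -- y lands in (0,1)
  have hymem : ∀ ξ, y ξ ∈ Set.Ioo (0:ℝ) 1 := by
    intro ξ
    obtain ⟨hm1, hm2⟩ := hmem ξ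
    rw [hy ξ]
    constructor
    · apply div_pos_of_neg_of_neg (by linarith) huMP
    · rw [div_lt_one_of_neg huMP]
      linarith
  -- y is strictly monotone hence injective
  have hymono : StrictMono y := by
    apply strictMono_of_deriv_pos
    intro x
    rw [(hyd x).deriv]
    exact hy'pos x
  -- range of y is (0,1)
  have hrange : y '' Set.univ = Set.Ioo (0:ℝ) 1 := by
    apply Set.Subset.antisymm
    · rintro t ⟨ξ, -, rfl⟩
      exact hymem ξ
    · intro t ht
      have hy0 : Tendsto y atBot (nhds 0) := by
        have h0 := (hlimM.sub_const uM).div_const (uP - uM)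
        simp only [sub_self, zero_div] at h0
        rw [hyfun]
        exact h0
      have hy1 : Tendsto y atTop (nhds 1) := by
        have h0 := (hlimP.sub_const uM).div_const (uP - uM)
        rw [div_self (by linarith : uP - uM ≠ 0)] at h0
        rw [hyfun]
        exact h0
      obtain ⟨ξ₁, hξ₁⟩ := ((tendsto_order.1 hy0).2 t ht.1).exists
      obtain ⟨ξ₂, hξ₂⟩ := ((tendsto_order.1 hy1).1 t ht.2).exists
      have hcont : ContinuousOn y (Set.uIcc ξ₁ ξ₂) :=
        (fun x _ => ((hyd x).continuousAt).continuousWithinAt)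
      have hsub : t ∈ Set.uIcc (y ξ₁) (y ξ₂) :=
        Set.Icc_subset_uIcc ⟨hξ₁.le, hξ₂.le⟩
      obtain ⟨ξ, -, hξ⟩ := intermediate_value_uIcc hcont hsub
      exact ⟨ξ, Set.mem_univ ξ, hξ⟩
  -- chain rule: ψ'(y ξ) D ξ = φ' a + φ aξ
  have hchain : ∀ ξ, ψ' (y ξ) * D ξ = φ' ξ * a (U ξ) + φ ξ * aξ ξ := by
    intro ξ
    have c1 : HasDerivAt (fun ζ => ψ (y ζ)) (ψ' (y ξ) * D ξ) ξ :=
      (hψ' (y ξ) (hymem ξ)).comp ξ (hyd ξ)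
    have c2 : (fun ζ => ψ (y ζ)) = fun ζ => φ ζ * a (U ζ) := funext hψ
    rw [c2] at c1
    have c3 : HasDerivAt (fun ζ => φ ζ * a (U ζ)) (φ' ξ * a (U ξ) + φ ξ * aξ ξ) ξ :=
      (hφ ξ).mul (haξ ξ)
    exact c1.unique c3
  -- key relation a(U) y (1-y) = y'
  have hkeyrel : ∀ ξ, a (U ξ) * (y ξ * (1 - y ξ)) = D ξ := by
    intro ξ
    obtain ⟨hm1, hm2⟩ := hmem ξ
    rw [ha _ (hmem ξ), hy ξ]
    have d1 : U ξ - uP ≠ 0 := by linarith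
    have d2 : U ξ - uM ≠ 0 := by linarith
    have d3 : uP - uM ≠ 0 := by linarith
    have e1 : 1 - (U ξ - uM) / (uP - uM) = (uP - U ξ) / (uP - uM) := by
      field_simp
      ring
    rw [e1, div_mul_div_comm, div_mul_div_comm,
      div_eq_div_iff (by exact mul_ne_zero (mul_ne_zero d1 d2) (mul_ne_zero d3 d3)) d3]
    ring
  -- the pulled-back integrand
  set I : ℝ → ℝ := fun ξ => (φ' ξ * a (U ξ) + φ ξ * aξ ξ) ^ 2 / a (U ξ) with hI
  have hpt : ∀ ξ, |D ξ| • ((y ξ) * (1 - y ξ) * (ψ' (y ξ)) ^ 2) = I ξ := by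
    intro ξ
    have h1 := hchain ξ
    have h2 := hkeyrel ξ
    have hDp := hy'pos ξ
    have hAp := hApos ξ
    have hv : ψ' (y ξ) = (φ' ξ * a (U ξ) + φ ξ * aξ ξ) / D ξ := by
      rw [eq_div_iff hDp.ne']; exact h1
    have hyy : y ξ * (1 - y ξ) = D ξ / a (U ξ) := by
      rw [eq_div_iff hAp.ne']; linarith [h2]
    rw [smul_eq_mul, abs_of_pos hDp, hv, hyy, hI]
    field_simp
  -- change of variables
  have hders : ∀ x ∈ (Set.univ : Set ℝ), HasDerivWithinAt y (D x) Set.univ x :=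
    fun x _ => (hyd x).hasDerivWithinAt
  have hinjOn : Set.InjOn y Set.univ := hymono.injective.injOn
  have hIint : Integrable I := by
    have := (integrableOn_image_iff_integrableOn_abs_deriv_smul MeasurableSet.univ hders hinjOn
      (fun t => t * (1 - t) * (ψ' t) ^ 2)).mp (hrange ▸ hint1)
    rw [integrableOn_univ] at this
    exact this.congr (ae_of_all _ hpt)
  have hIeq : (∫ t in Set.Ioo (0:ℝ) 1, t * (1 - t) * (ψ' t) ^ 2) = ∫ ξ, I ξ := by
    rw [← hrange, integral_image_eq_integral_abs_deriv_smul MeasurableSet.univ hders hinjOn,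
      setIntegral_univ]
    exact integral_congr_ae (ae_of_all _ hpt)
  -- decomposition
  set g : ℝ → ℝ := fun ξ => 2 * φ ξ * φ' ξ * aξ ξ + φ ξ ^ 2 * aξξ ξ with hg
  have hident : ∀ ξ, I ξ = a (U ξ) * φ' ξ ^ 2
      - (aξξ ξ - aξ ξ ^ 2 / a (U ξ)) * φ ξ ^ 2 + g ξ := by
    intro ξ
    have hAp := (hApos ξ).ne'
    rw [hI, hg]
    field_simp
    ring
  have hgint : Integrable g := by
    apply ((hIint.sub hint2).add hint3).congr
    apply ae_of_all
    intro ξ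
    have := hident ξ
    simp only [Pi.add_apply, Pi.sub_apply]
    linarith
  set G : ℝ → ℝ := fun ξ => φ ξ ^ 2 * aξ ξ with hG
  have hGd : ∀ ξ, HasDerivAt G (g ξ) ξ := by
    intro ξ
    have h2d : HasDerivAt (fun x => φ x ^ 2) (2 * φ ξ * φ' ξ) ξ := by
      have h0 := (hφ ξ).pow 2
      norm_num at h0
      exact h0
    exact h2d.mul (haξξ ξ)
  -- K integrable
  have hφc : Continuous φ := by
    rw [continuous_iff_continuousAt]; exact fun x => (hφ x).continuousAt
  have hAUc : Continuous (fun ζ => a (U ζ)) := by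
    rw [continuous_iff_continuousAt]; exact fun x => (haξ x).continuousAt
  have haξm : Measurable aξ := by
    have : aξ = deriv (fun ζ => a (U ζ)) := funext fun x => ((haξ x).deriv).symm
    rw [this]; exact measurable_deriv _
  have hKint : Integrable (fun ξ => φ ξ ^ 2 * aξ ξ ^ 2 / a (U ξ)) := by
    apply Integrable.mono' ((hIint.const_mul 2).add (hint2.const_mul 2))
    · exact (((hφc.measurable.pow_const 2).mul (haξm.pow_const 2)).div
        hAUc.measurable).aestronglyMeasurable
    · apply ae_of_all
      intro ξ
      have hAp := hApos ξ
      simp only [Pi.add_apply]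
      rw [Real.norm_eq_abs, abs_of_nonneg (div_nonneg (by positivity) hAp.le),
        div_le_iff₀ hAp]
      have hexp : (2 * I ξ + 2 * (a (U ξ) * φ' ξ ^ 2)) * a (U ξ)
          = 2 * (φ' ξ * a (U ξ) + φ ξ * aξ ξ) ^ 2 + 2 * a (U ξ) ^ 2 * φ' ξ ^ 2 := by
        rw [hI]; field_simp
      rw [hexp]
      nlinarith [sq_nonneg (2 * a (U ξ) * φ' ξ + φ ξ * aξ ξ)]
  -- limits of G at ±∞ are zero
  have htop : Tendsto G atTop (nhds 0) := by
    have hl := tendsto_limUnder_of_hasDerivAt_of_integrableOn_Ioi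
      (a := 0) (fun x _ => hGd x) hgint.integrableOn
    have := aux_limit_zero (fun ζ => a (U ζ)) aξ φ φ' hApos haξ hφ hint2 hKint _ hl
    rwa [this] at hl
  have hbot : Tendsto G atBot (nhds 0) := by
    have hl := tendsto_limUnder_of_hasDerivAt_of_integrableOn_Iic
      (a := 0) (fun x _ => hGd x) hgint.integrableOn
    have := aux_limit_zero_bot (fun ζ => a (U ζ)) aξ φ φ' hApos haξ hφ hint2 hKint _ hl
    rwa [this] at hl
  -- ∫ g = 0
  have hIoi : ∫ ξ in Set.Ioi (0:ℝ), g ξ = 0 - G 0 :=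
    integral_Ioi_of_hasDerivAt_of_tendsto' (fun x _ => hGd x) hgint.integrableOn htop
  have hIic : ∫ ξ in Set.Iic (0:ℝ), g ξ = G 0 - 0 :=
    integral_Iic_of_hasDerivAt_of_tendsto' (fun x _ => hGd x) hgint.integrableOn hbot
  have hgzero : ∫ ξ, g ξ = 0 := by
    rw [← intervalIntegral.integral_Iic_add_Ioi (b := (0:ℝ)) hgint.integrableOn hgint.integrableOn, hIoi, hIic]
    ring
  -- conclusion
  rw [hIeq]
  have hIfun : I = fun ξ => (a (U ξ) * φ' ξ ^ 2
      - (aξξ ξ - aξ ξ ^ 2 / a (U ξ)) * φ ξ ^ 2) + g ξ := funext fun ξ => hident ξ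
  have hsub : Integrable (fun ξ => a (U ξ) * φ' ξ ^ 2
      - (aξξ ξ - aξ ξ ^ 2 / a (U ξ)) * φ ξ ^ 2) := hint2.sub hint3
  rw [hIfun, integral_add hsub hgint, integral_sub hint2 hint3, hgzero, add_zero]
end
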